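/- arXiv:1202.0305 — 8 statements merged into one kernel-verified Lean document; each statement's English description precedes it below -/
import Mathlib

section
/- Let m, m_t, m_r be natural numbers with m_t ≤ m, m_r ≤ m and m_t + m_r ≥ m, and let H be an m×m complex unitary matrix. Then the characteristic polynomial of H₁₁ᴴ·H₁₁ factors as charpoly(H₁₁ᴴ·H₁₁) = (X − 1)^(m_t+m_r−m) · charpoly(H₂₂·H₂₂ᴴ). (In particular, m_t+m_r−m of the eigenvalues of H₁₁ᴴ·H₁₁ are equal to 1 and the remaining m−m_r eigenvalues coincide, with multiplicity, with the eigenvalues of H₂₂·H₂₂ᴴ.) -/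
/-
Split the columns of `H` as `m_t + (m − m_t)` and the rows as `m_r + (m − m_r)`, and let `H₂₁` be
the lower-left block. Unitarity gives `H₁₁ᴴ H₁₁ = 1 − H₂₁ᴴ H₂₁` (orthonormal columns) and
`H₂₂ H₂₂ᴴ = 1 − H₂₁ H₂₁ᴴ` (orthonormal rows). By Sylvester's identity
`X^l χ(UV) = X^k χ(VU)` for `U` of size `k × l`, transported along `X ↦ 1 − X`, this yields
`(X − 1)^(m−m_r) χ(H₁₁ᴴ H₁₁) = (X − 1)^(m_t) χ(H₂₂ H₂₂ᴴ)`; cancel `(X − 1)^(m−m_r)`.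
-/

open Matrix Polynomial

noncomputable section

/-- The upper-left `m_r × m_t` block of an `m × m` matrix
(first `m_r` rows and first `m_t` columns). -/
def sub11 {m : ℕ} (mt mr : ℕ) (hmt : mt ≤ m) (hmr : mr ≤ m)
    (H : Matrix (Fin m) (Fin m) ℂ) : Matrix (Fin mr) (Fin mt) ℂ :=
  Matrix.of fun i j => H (Fin.castLE hmr i) (Fin.castLE hmt j)

/-- The lower-right `(m−m_r) × (m−m_t)` block of an `m × m` matrix
(last `m−m_r` rows and last `m−m_t` columns). -/
def sub22 {m : ℕ} (mt mr : ℕ) (H : Matrix (Fin m) (Fin m) ℂ) :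
    Matrix (Fin (m - mr)) (Fin (m - mt)) ℂ :=
  Matrix.of fun i j => H ⟨mr + i, by omega⟩ ⟨mt + j, by omega⟩

namespace Matrix

theorem toBlocks₁₁_conjTranspose_mul_add {α ρ₁ ρ₂ κ₁ κ₂ : Type*} [Semiring α] [StarRing α]
    [Fintype ρ₁] [Fintype ρ₂] [DecidableEq κ₁] [DecidableEq κ₂]
    {M : Matrix (ρ₁ ⊕ ρ₂) (κ₁ ⊕ κ₂) α} (hM : Mᴴ * M = 1) :
    M.toBlocks₁₁ᴴ * M.toBlocks₁₁ + M.toBlocks₂₁ᴴ * M.toBlocks₂₁ = 1 := by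
  have h := congrArg toBlocks₁₁ hM
  rwa [← fromBlocks_toBlocks M, fromBlocks_conjTranspose, fromBlocks_multiply, ← fromBlocks_one,
    toBlocks_fromBlocks₁₁, toBlocks_fromBlocks₁₁] at h

theorem toBlocks₂₁_mul_conjTranspose_add {α ρ₁ ρ₂ κ₁ κ₂ : Type*} [Semiring α] [StarRing α]
    [DecidableEq ρ₁] [DecidableEq ρ₂] [Fintype κ₁] [Fintype κ₂]
    {M : Matrix (ρ₁ ⊕ ρ₂) (κ₁ ⊕ κ₂) α} (hM : M * Mᴴ = 1) :
    M.toBlocks₂₁ * M.toBlocks₂₁ᴴ + M.toBlocks₂₂ * M.toBlocks₂₂ᴴ = 1 := by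
  have h := congrArg toBlocks₂₂ hM
  rwa [← fromBlocks_toBlocks M, fromBlocks_conjTranspose, fromBlocks_multiply, ← fromBlocks_one,
    toBlocks_fromBlocks₂₂, toBlocks_fromBlocks₂₂] at h

section Submatrix

variable {α n ρ κ : Type*} [Semiring α] [StarRing α] [Fintype n] (e₁ : ρ ≃ n) (e₂ : κ ≃ n)

theorem conjTranspose_mul_self_submatrix_equiv [Fintype ρ] [DecidableEq n] [DecidableEq κ]
    {H : Matrix n n α} (hH : Hᴴ * H = 1) :
    (H.submatrix e₁ e₂)ᴴ * H.submatrix e₁ e₂ = 1 := by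
  rw [conjTranspose_submatrix, submatrix_mul_equiv, hH, submatrix_one_equiv]

theorem mul_conjTranspose_self_submatrix_equiv [Fintype κ] [DecidableEq n] [DecidableEq ρ]
    {H : Matrix n n α} (hH : H * Hᴴ = 1) :
    H.submatrix e₁ e₂ * (H.submatrix e₁ e₂)ᴴ = 1 := by
  rw [conjTranspose_submatrix, submatrix_mul_equiv, hH, submatrix_one_equiv]

end Submatrix

section Charpoly

variable {R m n : Type*} [CommRing R] [Fintype m] [DecidableEq m] [Fintype n] [DecidableEq n]

theorem charpoly_comp_one_sub (M : Matrix n n R) :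
    M.charpoly.comp (1 - X) = (-1) ^ Fintype.card n * (1 - M).charpoly := by
  have hmap : (compRingHom (1 - X)).mapMatrix (charmatrix M) = -charmatrix (1 - M) := by
    ext i j : 1
    by_cases h : i = j
    · subst h
      simp only [RingHom.mapMatrix_apply, coe_compRingHom, map_apply, charmatrix_apply_eq,
        sub_comp, X_comp, C_comp, Matrix.neg_apply, Matrix.sub_apply, one_apply_eq, map_sub,
        map_one, neg_sub]
      ring
    · simp [h]
  rw [← coe_compRingHom_apply, charpoly, RingHom.map_det, hmap, det_neg, charpoly]

theorem charpoly_one_sub_mul_comm' (A : Matrix m n R) (B : Matrix n m R) :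
    (X - 1) ^ Fintype.card n * (1 - A * B).charpoly
      = (X - 1) ^ Fintype.card m * (1 - B * A).charpoly := by
  have h := congrArg (·.comp (1 - X)) (charpoly_mul_comm' A B)
  simp only [mul_comp, pow_comp, X_comp, charpoly_comp_one_sub] at h
  rw [← neg_sub 1 X, neg_pow (1 - X), neg_pow (1 - X)]
  linear_combination (norm := ring_nf) (-1) ^ (Fintype.card m + Fintype.card n) * h
  simp only [pow_mul', neg_one_sq, one_pow, mul_one]
  ring

end Charpoly

end Matrix

def finSumFinSubEquiv {m k : ℕ} (h : k ≤ m) : Fin k ⊕ Fin (m - k) ≃ Fin m :=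
  finSumFinEquiv.trans (finCongr (Nat.add_sub_cancel' h))

/-- **Lemma 1 (deterministic part).** If `H` is an `m × m` unitary matrix with
`m_t ≤ m`, `m_r ≤ m` and `m_t + m_r ≥ m`, then
`charpoly(H₁₁ᴴ H₁₁) = (X − 1)^(m_t+m_r−m) · charpoly(H₂₂ H₂₂ᴴ)`:
`m_t+m_r−m` eigenvalues of `H₁₁ᴴ H₁₁` equal `1` and the remaining ones coincide
with the eigenvalues of `H₂₂ H₂₂ᴴ`. -/
theorem charpoly_sub11_eq_of_unitary (m mt mr : ℕ) (hmt : mt ≤ m) (hmr : mr ≤ m)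
    (hsum : m ≤ mt + mr) (H : Matrix (Fin m) (Fin m) ℂ) (hH : Hᴴ * H = 1) :
    ((sub11 mt mr hmt hmr H)ᴴ * sub11 mt mr hmt hmr H).charpoly
      = (X - 1) ^ (mt + mr - m) * (sub22 mt mr H * (sub22 mt mr H)ᴴ).charpoly := by
  set M := H.submatrix (finSumFinSubEquiv hmr) (finSumFinSubEquiv hmt)
  have h11 : M.toBlocks₁₁ = sub11 mt mr hmt hmr H := rfl
  have h22 : M.toBlocks₂₂ = sub22 mt mr H := rfl
  have hcols :
      (sub11 mt mr hmt hmr H)ᴴ * sub11 mt mr hmt hmr H = 1 - M.toBlocks₂₁ᴴ * M.toBlocks₂₁ :=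
    eq_sub_of_add_eq <| h11 ▸ toBlocks₁₁_conjTranspose_mul_add
      (conjTranspose_mul_self_submatrix_equiv _ _ hH)
  have hrows : sub22 mt mr H * (sub22 mt mr H)ᴴ = 1 - M.toBlocks₂₁ * M.toBlocks₂₁ᴴ :=
    eq_sub_of_add_eq' <| h22 ▸ toBlocks₂₁_mul_conjTranspose_add
      (mul_conjTranspose_self_submatrix_equiv _ _ (mul_eq_one_comm.mp hH))
  have key := charpoly_one_sub_mul_comm' M.toBlocks₂₁ᴴ M.toBlocks₂₁
  rw [← hcols, ← hrows, Fintype.card_fin, Fintype.card_fin] at key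
  have hsplit : (X - 1 : ℂ[X]) ^ mt = (X - 1) ^ (m - mr) * (X - 1) ^ (mt + mr - m) := by
    rw [← pow_add]; congr 1; omega
  rw [hsplit, mul_assoc] at key
  exact mul_left_cancel₀ (pow_ne_zero _ (X_sub_C_ne_zero 1)) key
end
end

section
/- Let m, m_t, m_r be natural numbers with m_t ≤ m and m_r ≤ m, and let H be an m×m complex unitary matrix. Then the squared Frobenius norm of H₁₁ satisfies ∑_{i<m_r} ∑_{j<m_t} |H i j|² ≥ m_t + m_r − m (as real numbers; the bound is vacuous when m_t + m_r ≤ m). In particular, when m_t+m_r > m the channel power ‖H₁₁‖_F² is guaranteed to be at least m_t+m_r−m for every realization of H. -/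
/-!
Columns and rows of a unitary matrix are unit vectors. Summing the column identities over
the column block `B` gives `‖H_{A,B}‖² = |B| - ‖H_{Aᶜ,B}‖²`, and each row of `H_{Aᶜ,B}` is part
of a unit row, so `‖H_{Aᶜ,B}‖² ≤ |Aᶜ|`.
-/

open Matrix Finset

namespace Matrix

variable {𝕜 m n : Type*} [RCLike 𝕜]

theorem conjTranspose_mul_self_apply_self [Fintype m] (H : Matrix m n 𝕜) (j : n) :
    (Hᴴ * H) j j = ((∑ i, ‖H i j‖ ^ 2 : ℝ) : 𝕜) := by
  simp only [mul_apply, conjTranspose_apply, RCLike.star_def, RCLike.conj_mul]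
  push_cast
  rfl

theorem sum_norm_sq_col_eq_one [Fintype m] [DecidableEq n] {H : Matrix m n 𝕜}
    (hH : Hᴴ * H = 1) (j : n) :
    ∑ i, ‖H i j‖ ^ 2 = 1 := by
  have h := conjTranspose_mul_self_apply_self H j
  rw [hH, one_apply_eq] at h
  exact_mod_cast h.symm

theorem sum_norm_sq_row_eq_one [Fintype n] [DecidableEq m] {H : Matrix m n 𝕜}
    (hH : H * Hᴴ = 1) (i : m) :
    ∑ j, ‖H i j‖ ^ 2 = 1 := by
  simpa using sum_norm_sq_col_eq_one (H := Hᴴ) (by simpa using hH) i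

theorem card_add_card_sub_card_le_sum_norm_sq [Fintype m] [DecidableEq m] {H : Matrix m m 𝕜}
    (hH : Hᴴ * H = 1) (A B : Finset m) :
    (#B : ℝ) + #A - Fintype.card m ≤ ∑ i ∈ A, ∑ j ∈ B, ‖H i j‖ ^ 2 := by
  have hcols :
      ∑ i ∈ A, ∑ j ∈ B, ‖H i j‖ ^ 2 = #B - ∑ i ∈ Aᶜ, ∑ j ∈ B, ‖H i j‖ ^ 2 := by
    rw [eq_sub_iff_add_eq, sum_add_sum_compl, sum_comm]
    simp [sum_norm_sq_col_eq_one hH]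
  have hrows : ∑ i ∈ Aᶜ, ∑ j ∈ B, ‖H i j‖ ^ 2 ≤ #Aᶜ := by
    calc ∑ i ∈ Aᶜ, ∑ j ∈ B, ‖H i j‖ ^ 2
        ≤ ∑ i ∈ Aᶜ, ∑ j, ‖H i j‖ ^ 2 :=
          sum_le_sum fun i _ => sum_le_univ_sum_of_nonneg fun _ => sq_nonneg _
      _ = #Aᶜ := by simp [sum_norm_sq_row_eq_one (mul_eq_one_comm.mp hH)]
  rw [card_compl, Nat.cast_sub (card_le_univ A)] at hrows
  linarith

end Matrix

/-- The squared Frobenius norm of the `m_r × m_t` upper-left block of an `m × m`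
unitary matrix is at least `m_t + m_r − m`. -/
theorem frobenius_sq_sub11_ge (m mt mr : ℕ) (hmt : mt ≤ m) (hmr : mr ≤ m)
    (H : Matrix (Fin m) (Fin m) ℂ) (hH : Hᴴ * H = 1) :
    (mt : ℝ) + (mr : ℝ) - (m : ℝ)
      ≤ ∑ i : Fin mr, ∑ j : Fin mt, ‖H (Fin.castLE hmr i) (Fin.castLE hmt j)‖ ^ 2 := by
  simpa [sum_map] using
    card_add_card_sub_card_le_sum_norm_sq hH (univ.map (Fin.castLEEmb hmr))
      (univ.map (Fin.castLEEmb hmt))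
end

section
/- Let m, m_t, m_r be natural numbers with m_t ≤ m, m_r ≤ m and m_t + m_r ≥ m, let H be an m×m complex unitary matrix, and let ρ ≥ 0 be a real number. Then det(I_{m_t} + ρ·H₁₁ᴴ·H₁₁) = (1+ρ)^(m_t+m_r−m) · det(I_{m−m_r} + ρ·H₂₂·H₂₂ᴴ). -/
open Matrix

noncomputable section

lemma fin_sum_split {M : Type*} [AddCommMonoid M] {m k : ℕ} (hk : k ≤ m) (f : Fin m → M) :
    ∑ i, f i = (∑ i : Fin k, f (Fin.castLE hk i)) + ∑ i : Fin (m - k), f ⟨k + i, by omega⟩ := by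
  have hm : k + (m - k) = m := by omega
  rw [← (finCongr hm).sum_comp f, Fin.sum_univ_add]
  congr 1


/-- For a unitary `H` with `m_t + m_r ≥ m` and `ρ ≥ 0`:
`det(I + ρ H₁₁ᴴ H₁₁) = (1+ρ)^(m_t+m_r−m) · det(I + ρ H₂₂ H₂₂ᴴ)`. -/
theorem det_one_add_smul_sub11_eq (m mt mr : ℕ) (hmt : mt ≤ m) (hmr : mr ≤ m)
    (hsum : m ≤ mt + mr) (H : Matrix (Fin m) (Fin m) ℂ) (hH : Hᴴ * H = 1)
    (ρ : ℝ) (hρ : 0 ≤ ρ) :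
    (1 + (ρ : ℂ) • ((sub11 mt mr hmt hmr H)ᴴ * sub11 mt mr hmt hmr H)).det
      = ((1 + ρ : ℝ) : ℂ) ^ (mt + mr - m)
        * (1 + (ρ : ℂ) • (sub22 mt mr H * (sub22 mt mr H)ᴴ)).det := by
  set C : Matrix (Fin (m - mr)) (Fin mt) ℂ :=
    Matrix.of fun i j => H ⟨mr + i, by omega⟩ (Fin.castLE hmt j) with hC
  -- Block identity from HᴴH = 1
  have h1 : (sub11 mt mr hmt hmr H)ᴴ * sub11 mt mr hmt hmr H = 1 - Cᴴ * C := by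
    rw [eq_sub_iff_add_eq]
    ext j k
    have hentry := congrFun (congrFun hH (Fin.castLE hmt j)) (Fin.castLE hmt k)
    rw [Matrix.mul_apply] at hentry
    simp only [conjTranspose_apply] at hentry
    rw [fin_sum_split hmr] at hentry
    simp only [Matrix.add_apply, Matrix.mul_apply, conjTranspose_apply, sub11, hC,
      Matrix.of_apply, Matrix.one_apply, Fin.castLE_inj] at hentry ⊢
    exact hentry
  -- Block identity from HHᴴ = 1
  have hH' : H * Hᴴ = 1 := mul_eq_one_comm.mp hH
  have h2 : sub22 mt mr H * (sub22 mt mr H)ᴴ = 1 - C * Cᴴ := by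
    rw [eq_sub_iff_add_eq, add_comm]
    ext i j
    have hentry := congrFun (congrFun hH' ⟨mr + i, by omega⟩) ⟨mr + j, by omega⟩
    rw [Matrix.mul_apply] at hentry
    simp only [conjTranspose_apply] at hentry
    rw [fin_sum_split hmt] at hentry
    simp only [Matrix.add_apply, Matrix.mul_apply, conjTranspose_apply, sub22, hC,
      Matrix.of_apply, Matrix.one_apply, Fin.mk.injEq, add_right_inj,
      Fin.val_inj] at hentry ⊢
    exact hentry
  -- scalars
  set c : ℂ := 1 + (ρ : ℂ) with hc
  have hc0 : c ≠ 0 := by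
    rw [hc]
    intro h
    have := congrArg Complex.re h
    simp at this
    linarith
  set s : ℂ := (ρ : ℂ) / c with hs
  have hcs : c * s = (ρ : ℂ) := by
    rw [hs]; field_simp
  -- factorizations
  have key1 : (1 : Matrix (Fin mt) (Fin mt) ℂ) + (ρ : ℂ) • ((sub11 mt mr hmt hmr H)ᴴ * sub11 mt mr hmt hmr H)
      = c • (1 - s • (Cᴴ * C)) := by
    rw [h1, smul_sub, smul_sub, smul_smul, hcs, hc, add_smul, one_smul]
    abel
  have key2 : (1 : Matrix (Fin (m - mr)) (Fin (m - mr)) ℂ) + (ρ : ℂ) • (sub22 mt mr H * (sub22 mt mr H)ᴴ)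
      = c • (1 - s • (C * Cᴴ)) := by
    rw [h2, smul_sub, smul_sub, smul_smul, hcs, hc, add_smul, one_smul]
    abel
  -- Sylvester
  have sylv : (1 - s • (Cᴴ * C)).det = (1 - s • (C * Cᴴ)).det := by
    have e1 : (1 : Matrix (Fin mt) (Fin mt) ℂ) - s • (Cᴴ * C) = 1 + ((-s) • Cᴴ) * C := by
      rw [sub_eq_add_neg, ← neg_smul, ← Matrix.smul_mul]
    have e2 : (1 : Matrix (Fin (m - mr)) (Fin (m - mr)) ℂ) - s • (C * Cᴴ)
        = 1 + C * ((-s) • Cᴴ) := by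
      rw [sub_eq_add_neg, ← neg_smul, ← Matrix.mul_smul]
    rw [e1, e2, Matrix.det_one_add_mul_comm]
  have hcast : ((1 + ρ : ℝ) : ℂ) = c := by push_cast [hc]; ring
  rw [key1, key2, Matrix.det_smul, Matrix.det_smul, sylv, hcast]
  rw [Fintype.card_fin, Fintype.card_fin]
  have hpow : c ^ mt = c ^ (mt + mr - m) * c ^ (m - mr) := by
    rw [← pow_add]; congr 1; omega
  rw [hpow]; ring
end
end

section
/- (Theorem 2: ergodic capacity for m_t+m_r > m.) Let m, m_t, m_r be natural numbers with m_t ≤ m, m_r ≤ m and m_t + m_r ≥ m, and let ρ ≥ 0 be a real number. Then ∫_{U(m)} log |det(I_{m_t} + ρ·H₁₁ᴴ·H₁₁)| dμ(H) = (m_t+m_r−m)·log(1+ρ) + ∫_{U(m)} log |det(I_{m−m_r} + ρ·H₂₂·H₂₂ᴴ)| dμ(H); that is, the ergodic capacity equals m_t+m_r−m times the SISO capacity log(1+ρ) plus the ergodic capacity of a Jacobi channel with m−m_r transmit and m−m_t receive modes. -/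
/-!
Write `H₁₁, H₂₁, H₂₂` for the blocks of a unitary `U`. Orthonormality of the first `m_t` columns
gives `H₁₁ᴴ H₁₁ + H₂₁ᴴ H₂₁ = 1`, and orthonormality of the last `m - m_r` rows gives
`H₂₁ H₂₁ᴴ + H₂₂ H₂₂ᴴ = 1`. With `t = ρ / (1 + ρ)` this yields
`1 + ρ H₁₁ᴴ H₁₁ = (1 + ρ) (1 - t H₂₁ᴴ H₂₁)`; Sylvester's identity replaces `H₂₁ᴴ H₂₁` by
`H₂₁ H₂₁ᴴ`, and `1 - t H₂₁ H₂₁ᴴ = (1 + ρ)⁻¹ (1 + ρ H₂₂ H₂₂ᴴ)`. Comparing sizes, the two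
determinants differ by exactly `(1 + ρ) ^ (m_t + m_r - m)` at every point of `U(m)`, so the
identity holds before integration; the right-hand integrand is continuous on the compact group,
hence integrable.
-/

open Matrix MeasureTheory

noncomputable section

instance (m : ℕ) : MeasurableSpace (Matrix.unitaryGroup (Fin m) ℂ) := borel _
instance (m : ℕ) : BorelSpace (Matrix.unitaryGroup (Fin m) ℂ) := ⟨rfl⟩

namespace Matrix

variable {n ι κ α β l 𝕜 : Type*} [Fintype n] [Fintype ι] [Fintype κ]

section Blocks

variable [NonUnitalCommSemiring 𝕜] [StarRing 𝕜]

theorem submatrix_conjTranspose_mul_self_eq_add (A : Matrix n l 𝕜) (e : ι ⊕ κ ≃ n)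
    (c : α → l) :
    (Aᴴ * A).submatrix c c
      = (A.submatrix (e ∘ Sum.inl) c)ᴴ * A.submatrix (e ∘ Sum.inl) c
        + (A.submatrix (e ∘ Sum.inr) c)ᴴ * A.submatrix (e ∘ Sum.inr) c := by
  ext i j
  simp [mul_apply, ← e.sum_comp, Fintype.sum_sum_type]

theorem submatrix_mul_conjTranspose_self_eq_add (A : Matrix l n 𝕜) (e : ι ⊕ κ ≃ n)
    (r : α → l) :
    (A * Aᴴ).submatrix r r
      = A.submatrix r (e ∘ Sum.inl) * (A.submatrix r (e ∘ Sum.inl))ᴴ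
        + A.submatrix r (e ∘ Sum.inr) * (A.submatrix r (e ∘ Sum.inr))ᴴ := by
  simpa [conjTranspose_submatrix] using submatrix_conjTranspose_mul_self_eq_add Aᴴ e r

end Blocks

section Det

variable [Fintype α] [Fintype β] [Field 𝕜] [StarRing 𝕜] [DecidableEq α] [DecidableEq κ]

theorem det_one_add_smul_conjTranspose_mul_self_eq {A : Matrix ι α 𝕜} {B : Matrix κ α 𝕜}
    {C : Matrix κ β 𝕜} (hAB : Aᴴ * A + Bᴴ * B = 1) (hBC : B * Bᴴ + C * Cᴴ = 1)
    (hκα : Fintype.card κ ≤ Fintype.card α) {r : 𝕜} (hr : 1 + r ≠ 0) :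
    (1 + r • (Aᴴ * A)).det
      = (1 + r) ^ (Fintype.card α - Fintype.card κ) * (1 + r • (C * Cᴴ)).det := by
  have hA : 1 + r • (Aᴴ * A) = (1 + r) • (1 + Bᴴ * (-(r / (1 + r)) • B)) := by
    rw [eq_sub_of_add_eq hAB, Matrix.mul_smul, smul_add, smul_smul, mul_neg,
      mul_div_cancel₀ r hr]
    module
  have hC : 1 + (-(r / (1 + r)) • B) * Bᴴ = (1 + r)⁻¹ • (1 + r • (C * Cᴴ)) := by
    have hinv : (1 + r)⁻¹ = 1 - r / (1 + r) := by field_simp; ring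
    rw [Matrix.smul_mul, eq_sub_of_add_eq' hBC, smul_add, smul_smul, inv_mul_eq_div, hinv]
    module
  rw [hA, det_smul, det_one_add_mul_comm, hC, det_smul, inv_pow, ← mul_assoc,
    ← pow_sub₀ _ hr hκα]

theorem det_one_add_smul_submatrix_of_mem_unitaryGroup [DecidableEq n] {U : Matrix n n 𝕜}
    (hU : U ∈ unitaryGroup n 𝕜) (e : ι ⊕ κ ≃ n) (f : α ⊕ β ≃ n)
    (hcard : Fintype.card n ≤ Fintype.card ι + Fintype.card α) {r : 𝕜} (hr : 1 + r ≠ 0) :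
    (1 + r • ((U.submatrix (e ∘ Sum.inl) (f ∘ Sum.inl))ᴴ
        * U.submatrix (e ∘ Sum.inl) (f ∘ Sum.inl))).det
      = (1 + r) ^ (Fintype.card ι + Fintype.card α - Fintype.card n)
        * (1 + r • (U.submatrix (e ∘ Sum.inr) (f ∘ Sum.inr)
          * (U.submatrix (e ∘ Sum.inr) (f ∘ Sum.inr))ᴴ)).det := by
  have hcols : (Uᴴ * U).submatrix (f ∘ Sum.inl) (f ∘ Sum.inl) = 1 := by
    rw [← star_eq_conjTranspose, mem_unitaryGroup_iff'.mp hU,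
      submatrix_one _ (f.injective.comp Sum.inl_injective)]
  have hrows : (U * Uᴴ).submatrix (e ∘ Sum.inr) (e ∘ Sum.inr) = 1 := by
    rw [← star_eq_conjTranspose, mem_unitaryGroup_iff.mp hU,
      submatrix_one _ (e.injective.comp Sum.inr_injective)]
  rw [submatrix_conjTranspose_mul_self_eq_add U e] at hcols
  rw [submatrix_mul_conjTranspose_self_eq_add U f] at hrows
  have hι := Fintype.card_congr e
  rw [Fintype.card_sum] at hι
  rw [det_one_add_smul_conjTranspose_mul_self_eq hcols hrows (by omega) hr]
  congr 2
  omega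

end Det

section PosDef

open scoped ComplexOrder

variable [RCLike 𝕜] [DecidableEq κ] [Fintype β]

theorem posDef_one_add_smul_mul_conjTranspose (C : Matrix κ β 𝕜) {ρ : ℝ} (hρ : 0 ≤ ρ) :
    (1 + (ρ : 𝕜) • (C * Cᴴ)).PosDef :=
  PosDef.one.add_posSemidef <|
    (posSemidef_self_mul_conjTranspose C).smul (RCLike.ofReal_nonneg.mpr hρ)

theorem det_one_add_smul_mul_conjTranspose_ne_zero (C : Matrix κ β 𝕜) {ρ : ℝ} (hρ : 0 ≤ ρ) :
    (1 + (ρ : 𝕜) • (C * Cᴴ)).det ≠ 0 :=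
  (posDef_one_add_smul_mul_conjTranspose C hρ).det_pos.ne'

end PosDef

instance [DecidableEq n] [RCLike 𝕜] : CompactSpace (unitaryGroup n 𝕜) :=
  isCompact_iff_compactSpace.mp <|
    (isCompact_univ_pi fun _ => isCompact_univ_pi fun _ => isCompact_closedBall (0 : 𝕜) 1)
      |>.of_isClosed_subset (isClosed_unitary (R := Matrix n n 𝕜)) fun U hU i _ j _ => by
        simpa using entry_norm_bound_of_unitary hU i j

end Matrix

def Fin.sumSubEquiv {m k : ℕ} (h : k ≤ m) : Fin k ⊕ Fin (m - k) ≃ Fin m :=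
  finSumFinEquiv.trans (finCongr (Nat.add_sub_cancel' h))

theorem sub11_eq_submatrix {m mt mr : ℕ} (hmt : mt ≤ m) (hmr : mr ≤ m)
    (H : Matrix (Fin m) (Fin m) ℂ) :
    sub11 mt mr hmt hmr H
      = H.submatrix (Fin.sumSubEquiv hmr ∘ Sum.inl) (Fin.sumSubEquiv hmt ∘ Sum.inl) :=
  rfl

theorem sub22_eq_submatrix {m mt mr : ℕ} (hmt : mt ≤ m) (hmr : mr ≤ m)
    (H : Matrix (Fin m) (Fin m) ℂ) :
    sub22 mt mr H
      = H.submatrix (Fin.sumSubEquiv hmr ∘ Sum.inr) (Fin.sumSubEquiv hmt ∘ Sum.inr) :=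
  rfl

theorem log_norm_det_sub11_eq {m mt mr : ℕ} (hmt : mt ≤ m) (hmr : mr ≤ m) (hsum : m ≤ mt + mr)
    {ρ : ℝ} (hρ : 0 ≤ ρ) {U : Matrix (Fin m) (Fin m) ℂ} (hU : U ∈ unitaryGroup (Fin m) ℂ) :
    Real.log ‖(1 + (ρ : ℂ) • ((sub11 mt mr hmt hmr U)ᴴ * sub11 mt mr hmt hmr U)).det‖
      = ((mt : ℝ) + mr - m) * Real.log (1 + ρ)
        + Real.log ‖(1 + (ρ : ℂ) • (sub22 mt mr U * (sub22 mt mr U)ᴴ)).det‖ := by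
  have hnorm : ‖1 + (ρ : ℂ)‖ = 1 + ρ := by
    rw [← Complex.ofReal_one, ← Complex.ofReal_add, Complex.norm_of_nonneg (by linarith)]
  have hr : 1 + (ρ : ℂ) ≠ 0 := norm_ne_zero_iff.mp (by rw [hnorm]; linarith)
  have hcard : Fintype.card (Fin m) ≤ Fintype.card (Fin mr) + Fintype.card (Fin mt) := by
    simp only [Fintype.card_fin]; omega
  rw [sub11_eq_submatrix, det_one_add_smul_submatrix_of_mem_unitaryGroup hU _ _ hcard hr,
    ← sub22_eq_submatrix, norm_mul, norm_pow, hnorm, Real.log_mul (by positivity)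
      (norm_ne_zero_iff.mpr (det_one_add_smul_mul_conjTranspose_ne_zero _ hρ)), Real.log_pow]
  simp only [Fintype.card_fin]
  rw [Nat.cast_sub (by omega)]
  push_cast
  ring

theorem continuous_log_norm_det_sub22 {m : ℕ} (mt mr : ℕ) {ρ : ℝ} (hρ : 0 ≤ ρ) :
    Continuous fun U : unitaryGroup (Fin m) ℂ =>
      Real.log ‖(1 + (ρ : ℂ) • (sub22 mt mr (U : Matrix (Fin m) (Fin m) ℂ)
        * (sub22 mt mr (U : Matrix (Fin m) (Fin m) ℂ))ᴴ)).det‖ := by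
  have hsub : Continuous fun U : unitaryGroup (Fin m) ℂ =>
      sub22 mt mr (U : Matrix (Fin m) (Fin m) ℂ) :=
    continuous_subtype_val.matrix_submatrix _ _
  refine Continuous.log ?_ fun U =>
    norm_ne_zero_iff.mpr (det_one_add_smul_mul_conjTranspose_ne_zero _ hρ)
  fun_prop

theorem ergodic_capacity_of_sum_gt_general (m mt mr : ℕ) (hmt : mt ≤ m) (hmr : mr ≤ m)
    (hsum : m ≤ mt + mr) (ρ : ℝ) (hρ : 0 ≤ ρ)
    (μ : Measure (Matrix.unitaryGroup (Fin m) ℂ)) [IsProbabilityMeasure μ] :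
    (∫ U : Matrix.unitaryGroup (Fin m) ℂ,
        Real.log (Norm.norm
          (1 + (ρ : ℂ) • ((sub11 mt mr hmt hmr (U : Matrix (Fin m) (Fin m) ℂ))ᴴ
            * sub11 mt mr hmt hmr (U : Matrix (Fin m) (Fin m) ℂ))).det) ∂μ)
      = ((mt : ℝ) + mr - m) * Real.log (1 + ρ)
        + ∫ U : Matrix.unitaryGroup (Fin m) ℂ,
            Real.log (Norm.norm
              (1 + (ρ : ℂ) • (sub22 mt mr (U : Matrix (Fin m) (Fin m) ℂ)
                * (sub22 mt mr (U : Matrix (Fin m) (Fin m) ℂ))ᴴ)).det) ∂μ := by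
  have hint := (continuous_log_norm_det_sub22 (m := m) mt mr hρ).integrable_of_hasCompactSupport
    (μ := μ) (.of_compactSpace _)
  rw [integral_congr_ae (ae_of_all _ fun U => log_norm_det_sub11_eq hmt hmr hsum hρ U.2),
    integral_add (integrable_const _) hint, integral_const, probReal_univ, one_smul]

/-- **Theorem 2 (ergodic capacity for `m_t + m_r > m`).** Under the Haar
probability measure `μ` on the unitary group `U(m)`, the ergodic capacity
`E[log det(I + ρ H₁₁ᴴ H₁₁)]` equals `(m_t+m_r−m)·log(1+ρ)` (that many unfaded
SISO capacities) plus the ergodic capacity `E[log det(I + ρ H₂₂ H₂₂ᴴ)]` of the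
residual Jacobi channel with `m−m_r` transmit and `m−m_t` receive modes. -/
theorem ergodic_capacity_of_sum_gt (m mt mr : ℕ) (hmt : mt ≤ m) (hmr : mr ≤ m)
    (hsum : m ≤ mt + mr) (ρ : ℝ) (hρ : 0 ≤ ρ)
    (μ : Measure (Matrix.unitaryGroup (Fin m) ℂ)) [μ.IsHaarMeasure] [IsProbabilityMeasure μ] :
    (∫ U : Matrix.unitaryGroup (Fin m) ℂ,
        Real.log (Norm.norm
          (1 + (ρ : ℂ) • ((sub11 mt mr hmt hmr (U : Matrix (Fin m) (Fin m) ℂ))ᴴ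
            * sub11 mt mr hmt hmr (U : Matrix (Fin m) (Fin m) ℂ))).det) ∂μ)
      = ((mt : ℝ) + mr - m) * Real.log (1 + ρ)
        + ∫ U : Matrix.unitaryGroup (Fin m) ℂ,
            Real.log (Norm.norm
              (1 + (ρ : ℂ) • (sub22 mt mr (U : Matrix (Fin m) (Fin m) ℂ)
                * (sub22 mt mr (U : Matrix (Fin m) (Fin m) ℂ))ᴴ)).det) ∂μ :=
  ergodic_capacity_of_sum_gt_general m mt mr hmt hmr hsum ρ hρ μ
end
end

section
/- (Zero outage below the guaranteed rate.) Let m, m_t, m_r be natural numbers with m_t ≤ m, m_r ≤ m and m_t + m_r > m, let ρ ≥ 0 and let r be a real number with r < m_t+m_r−m. Then μ{H ∈ U(m) : |det(I_{m_t} + ρ·H₁₁ᴴ·H₁₁)| < (1+ρ)^r} = 0; that is, a strictly zero outage probability is achievable for any transmission rate below (m_t+m_r−m)·log(1+ρ). -/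
/-!
The outage set is empty. For unitary `H`, orthonormality of the first `m_t` columns gives
`H₁₁ᴴH₁₁ = 1 - H₂₁ᴴH₂₁`, and orthonormality of the last `m - m_r` rows gives
`H₂₁H₂₁ᴴ = 1 - H₂₂H₂₂ᴴ`. Sylvester's determinant identity then yields
`det(1 + ρH₁₁ᴴH₁₁) (1+ρ)^(m-m_r) = (1+ρ)^m_t det(1 + ρH₂₂H₂₂ᴴ)`, and the last determinant is at
least `1` since `H₂₂H₂₂ᴴ` is positive semidefinite. Hence `|det(1 + ρH₁₁ᴴH₁₁)| ≥ (1+ρ)^(m_t+m_r-m)`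
for every `H`, which exceeds `(1+ρ)^r`.
-/

open Matrix MeasureTheory

noncomputable section

open ComplexOrder

def natAddSub {k m : ℕ} (hk : k ≤ m) (i : Fin (m - k)) : Fin m :=
  ⟨k + i, by omega⟩

theorem natAddSub_injective {k m : ℕ} (hk : k ≤ m) : Function.Injective (natAddSub hk) :=
  fun i j h => Fin.ext (by simpa [natAddSub] using h)

theorem Fin.sum_univ_eq_sum_castLE_add_sum_natAddSub {M : Type*} [AddCommMonoid M] {k m : ℕ}
    (hk : k ≤ m) (f : Fin m → M) :
    ∑ i, f i = ∑ i : Fin k, f (Fin.castLE hk i) + ∑ i : Fin (m - k), f (natAddSub hk i) := by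
  have h : k + (m - k) = m := by omega
  rw [← (finCongr h).sum_comp, Fin.sum_univ_add]
  rfl

theorem Matrix.submatrix_mul_eq_add {l o l' o' α : Type*} [NonUnitalNonAssocSemiring α]
    {k m : ℕ} (hk : k ≤ m) (X : Matrix l (Fin m) α) (Y : Matrix (Fin m) o α)
    (r : l' → l) (c : o' → o) :
    (X * Y).submatrix r c =
      X.submatrix r (Fin.castLE hk) * Y.submatrix (Fin.castLE hk) c +
        X.submatrix r (natAddSub hk) * Y.submatrix (natAddSub hk) c := by
  ext i j
  simp only [submatrix_apply, add_apply, mul_apply]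
  exact Fin.sum_univ_eq_sum_castLE_add_sum_natAddSub hk _

theorem Matrix.PosSemidef.one_le_norm_det_one_add {n 𝕜 : Type*} [Fintype n] [DecidableEq n]
    [RCLike 𝕜] {P : Matrix n n 𝕜} (hP : P.PosSemidef) : 1 ≤ ‖(1 + P).det‖ := by
  have hdet : (1 + P).det = ∏ i, ((1 + hP.1.eigenvalues i : ℝ) : 𝕜) := by
    conv_lhs =>
      rw [hP.1.spectral_theorem, ← map_one (Unitary.conjStarAlgAut 𝕜 _ hP.1.eigenvectorUnitary),
        ← map_add, Unitary.conjStarAlgAut_apply, det_mul, det_mul, mul_right_comm, ← det_mul,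
        Unitary.mul_star_self_of_mem (SetLike.coe_mem _)]
    simp [← diagonal_one, diagonal_add, det_diagonal]
  rw [hdet, norm_prod]
  refine Finset.one_le_prod fun i _ => ?_
  rw [RCLike.norm_ofReal]
  exact le_abs.2 (Or.inl (le_add_of_nonneg_right (hP.eigenvalues_nonneg i)))

/-- `1 + ρ P = (1 + ρ) (1 - ρ/(1+ρ) X Y)`, and the Weinstein–Aronszajn identity trades `X Y` for
`Y X = 1 - Q`. -/
theorem Matrix.det_one_add_smul_mul_pow_card_eq {K n p : Type*} [Field K] [Fintype n]
    [DecidableEq n] [Fintype p] [DecidableEq p] {P : Matrix n n K} {Q : Matrix p p K}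
    {X : Matrix n p K} {Y : Matrix p n K} (hP : P + X * Y = 1) (hQ : Y * X + Q = 1) {ρ : K}
    (hρ : 1 + ρ ≠ 0) :
    det (1 + ρ • P) * (1 + ρ) ^ Fintype.card p = (1 + ρ) ^ Fintype.card n * det (1 + ρ • Q) := by
  have hPX : 1 + ρ • P = (1 + ρ) • (1 + X * ((-ρ / (1 + ρ)) • Y)) := by
    rw [eq_sub_of_add_eq hP, Matrix.mul_smul]
    match_scalars <;> field_simp
  have hQY : 1 + ((-ρ / (1 + ρ)) • Y) * X = (1 + ρ)⁻¹ • (1 + ρ • Q) := by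
    rw [eq_sub_of_add_eq' hQ, Matrix.smul_mul]
    match_scalars <;> field_simp
  rw [hPX, det_smul, det_one_add_mul_comm, hQY, det_smul]
  rw [mul_right_comm, mul_assoc, inv_pow, mul_inv_cancel_left₀ (pow_ne_zero _ hρ)]

section UnitaryBlocks

variable {α : Type*} [CommRing α] [StarRing α] {m mt mr : ℕ} (hmt : mt ≤ m) (hmr : mr ≤ m)
  (U : unitaryGroup (Fin m) α)

theorem unitaryGroup_conjTranspose_mul_add_conjTranspose_mul_eq_one :
    (U.1.submatrix (Fin.castLE hmr) (Fin.castLE hmt))ᴴ *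
        U.1.submatrix (Fin.castLE hmr) (Fin.castLE hmt) +
      (U.1.submatrix (natAddSub hmr) (Fin.castLE hmt))ᴴ *
        U.1.submatrix (natAddSub hmr) (Fin.castLE hmt) = 1 := by
  have h := congrArg
    (fun M : Matrix (Fin m) (Fin m) α => M.submatrix (Fin.castLE hmt) (Fin.castLE hmt))
    (Unitary.star_mul_self_of_mem U.2)
  simp only [submatrix_one _ (Fin.castLE_injective hmt), submatrix_mul_eq_add hmr] at h
  exact h

theorem unitaryGroup_mul_conjTranspose_add_mul_conjTranspose_eq_one :
    U.1.submatrix (natAddSub hmr) (Fin.castLE hmt) *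
        (U.1.submatrix (natAddSub hmr) (Fin.castLE hmt))ᴴ +
      U.1.submatrix (natAddSub hmr) (natAddSub hmt) *
        (U.1.submatrix (natAddSub hmr) (natAddSub hmt))ᴴ = 1 := by
  have h := congrArg
    (fun M : Matrix (Fin m) (Fin m) α => M.submatrix (natAddSub hmr) (natAddSub hmr))
    (Unitary.mul_star_self_of_mem U.2)
  simp only [submatrix_one _ (natAddSub_injective hmr), submatrix_mul_eq_add hmt] at h
  exact h

end UnitaryBlocks

theorem pow_le_norm_det_one_add_smul_sub11 {m mt mr : ℕ} (hmt : mt ≤ m) (hmr : mr ≤ m)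
    (hm : m ≤ mt + mr) (U : unitaryGroup (Fin m) ℂ) {ρ : ℝ} (hρ : 0 ≤ ρ) :
    (1 + ρ) ^ (mt + mr - m) ≤
      ‖(1 + (ρ : ℂ) • ((sub11 mt mr hmt hmr U)ᴴ * sub11 mt mr hmt hmr U)).det‖ := by
  set C := U.1.submatrix (natAddSub hmr) (natAddSub hmt)
  have hρ' : (1 + (ρ : ℂ)) ≠ 0 := by exact_mod_cast (by linarith : (1 + ρ) ≠ 0)
  have hdet := congrArg norm <| det_one_add_smul_mul_pow_card_eq
    (unitaryGroup_conjTranspose_mul_add_conjTranspose_mul_eq_one hmt hmr U)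
    (unitaryGroup_mul_conjTranspose_add_mul_conjTranspose_eq_one hmt hmr U) hρ'
  have hC : 1 ≤ ‖(1 + (ρ : ℂ) • (C * Cᴴ)).det‖ :=
    ((posSemidef_self_mul_conjTranspose C).smul
      (Complex.zero_le_real.mpr hρ)).one_le_norm_det_one_add
  have hpow : (1 + ρ) ^ mt = (1 + ρ) ^ (mt + mr - m) * (1 + ρ) ^ (m - mr) := by
    rw [← pow_add]; congr 1; omega
  have hnorm : ‖(1 + (ρ : ℂ))‖ = 1 + ρ := by
    rw [← Complex.ofReal_one, ← Complex.ofReal_add, Complex.norm_real,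
      Real.norm_of_nonneg (by linarith)]
  simp only [norm_mul, norm_pow, Fintype.card_fin, hnorm] at hdet
  refine le_of_mul_le_mul_right ?_ (pow_pos (by linarith : 0 < 1 + ρ) (m - mr))
  calc (1 + ρ) ^ (mt + mr - m) * (1 + ρ) ^ (m - mr) = (1 + ρ) ^ mt := hpow.symm
    _ ≤ (1 + ρ) ^ mt * ‖(1 + (ρ : ℂ) • (C * Cᴴ)).det‖ :=
      le_mul_of_one_le_right (pow_nonneg (by linarith) _) hC
    _ = _ := hdet.symm

theorem outage_probability_eq_zero_general (m mt mr : ℕ) (hmt : mt ≤ m) (hmr : mr ≤ m)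
    (hsum : m < mt + mr) (ρ : ℝ) (hρ : 0 ≤ ρ) (r : ℝ) (hr : r < ((mt + mr - m : ℕ) : ℝ))
    (μ : Measure (Matrix.unitaryGroup (Fin m) ℂ)) :
    μ {U : Matrix.unitaryGroup (Fin m) ℂ |
        ‖(1 + (ρ : ℂ) • ((sub11 mt mr hmt hmr (U : Matrix (Fin m) (Fin m) ℂ))ᴴ
          * sub11 mt mr hmt hmr (U : Matrix (Fin m) (Fin m) ℂ))).det‖ < (1 + ρ) ^ r} = 0 := by
  convert measure_empty (μ := μ)
  refine Set.eq_empty_of_forall_notMem fun U => Set.notMem_ofPred_iff.2 (not_lt.2 ?_)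
  calc (1 + ρ) ^ r ≤ (1 + ρ) ^ ((mt + mr - m : ℕ) : ℝ) :=
        Real.rpow_le_rpow_of_exponent_le (by linarith) hr.le
    _ = (1 + ρ) ^ (mt + mr - m) := Real.rpow_natCast _ _
    _ ≤ _ := pow_le_norm_det_one_add_smul_sub11 hmt hmr hsum.le U hρ

/-- **Zero outage below the guaranteed rate.** For `m_t + m_r > m` and any
multiplexing rate `r < m_t+m_r−m`, the outage probability at rate
`r·log(1+ρ)` under the Haar probability measure on `U(m)` is exactly zero. -/
theorem outage_probability_eq_zero (m mt mr : ℕ) (hmt : mt ≤ m) (hmr : mr ≤ m)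
    (hsum : m < mt + mr) (ρ : ℝ) (hρ : 0 ≤ ρ) (r : ℝ) (hr : r < ((mt + mr - m : ℕ) : ℝ))
    (μ : Measure (Matrix.unitaryGroup (Fin m) ℂ)) [μ.IsHaarMeasure] [IsProbabilityMeasure μ] :
    μ {U : Matrix.unitaryGroup (Fin m) ℂ |
        ‖(1 + (ρ : ℂ) • ((sub11 mt mr hmt hmr (U : Matrix (Fin m) (Fin m) ℂ))ᴴ
          * sub11 mt mr hmt hmr (U : Matrix (Fin m) (Fin m) ℂ))).det‖ < (1 + ρ) ^ r} = 0 :=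
  outage_probability_eq_zero_general m mt mr hmt hmr hsum ρ hρ r hr μ
end
end

section
/- (Marginal eigenvalue density of the Jacobi ensemble, Appendix A.) Let n ≥ 1 be a natural number and α, β nonnegative integers, and define the weight w(λ₁,…,λₙ) = ∏_{i=1}^n λ_i^α (1−λ_i)^β · ∏_{1≤i<j≤n} (λ_i − λ_j)² on [0,1]^n, with normalization Z = ∫_{[0,1]^n} w(λ₁,…,λₙ) dλ₁⋯dλₙ. Then for every x ∈ [0,1], ∫_{[0,1]^{n−1}} w(x, λ₂,…,λₙ) dλ₂⋯dλₙ = (Z/n) · ∑_{k=0}^{n−1} b_{k,α,β}^{−1} · [P_k^{(α,β)}(1−2x)]² · x^α (1−x)^β; that is, the marginal density of one unordered eigenvalue of the Jacobi ensemble equals (1/n)·∑_{k=0}^{n−1} b_{k,α,β}^{−1} [P_k^{(α,β)}(1−2x)]² x^α(1−x)^β. -/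
open MeasureTheory

noncomputable section

/-- The Jacobi polynomial `P_k^{(α,β)}`, given by the Rodrigues formula
`P_k^{(α,β)}(x) = ((−1)^k/(2^k k!)) (1−x)^{−α} (1+x)^{−β}
  (d/dx)^k [(1−x)^{k+α} (1+x)^{k+β}]`. -/
def jacobiP (α β k : ℕ) (x : ℝ) : ℝ :=
  ((-1 : ℝ) ^ k / (2 ^ k * (Nat.factorial k))) * (1 - x) ^ (-(α : ℤ)) * (1 + x) ^ (-(β : ℤ))
    * iteratedDeriv k (fun y : ℝ => (1 - y) ^ (k + α) * (1 + y) ^ (k + β)) x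

/-- The normalization constant
`b_{k,α,β} = (1/(2k+α+β+1)) C(2k+α+β, k) C(2k+α+β, k+α)⁻¹`. -/
def bCoef (k α β : ℕ) : ℝ :=
  (1 / (2 * k + α + β + 1)) * ((2 * k + α + β).choose k)
    * (((2 * k + α + β).choose (k + α) : ℝ))⁻¹

/-- The (unnormalized) joint eigenvalue weight of the Jacobi ensemble:
`w(λ₁,…,λₙ) = ∏ᵢ λᵢ^α (1−λᵢ)^β · ∏_{i<j} (λᵢ − λⱼ)²`. -/
def jacobiWeight (n α β : ℕ) (l : Fin n → ℝ) : ℝ :=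
  (∏ i, l i ^ α * (1 - l i) ^ β) * ∏ i, ∏ j ∈ Finset.Ioi i, (l i - l j) ^ 2

/-!
Write `w(t) = t^α (1-t)^β`. The shifted Jacobi polynomials `φ_k`, defined on `[0,1]` by the
Rodrigues formula `w φ_k = (1/k!) (d/dt)^k [t^(k+α) (1-t)^(k+β)]`, satisfy
`P_k^{(α,β)}(1-2x) = φ_k(x)`, have degree `k` with leading coefficient `(-1)^k C(2k+α+β, k)`,
and `k` integrations by parts (no boundary terms, as the Rodrigues numerator vanishes to high
order at `0` and `1`) together with the Beta integral give `∫₀¹ φ_j φ_k w = δ_jk b_k`.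

Because the `φ_i` are triangular in the monomial basis, the Vandermonde determinant equals
`det[φ_i(λ_j)]` up to the constant `∏ c_i` of leading coefficients, so the Jacobi weight is a
constant multiple of `det[φ_i(λ_j)]² ∏ w(λ_j)`. Expanding the squared determinant as a double sum
over permutations `σ, τ`, orthogonality kills every term with `σ ≠ τ` once all variables, or all
but the first, are integrated out. This gives `Z ∝ n! ∏ b_i` and the marginal
`∝ (n-1)! ∏ b_i ∑_k b_k⁻¹ φ_k(x)² w(x)` with the same constant.
-/

open Polynomial Finset Equiv

namespace Polynomial

variable {R : Type*}

theorem natDegree_one_sub_X [Ring R] [Nontrivial R] : (1 - X : R[X]).natDegree = 1 := by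
  compute_degree!

theorem one_sub_X_ne_zero [Ring R] [Nontrivial R] : (1 - X : R[X]) ≠ 0 :=
  ne_zero_of_natDegree_gt (n := 0) (by rw [natDegree_one_sub_X]; omega)

theorem leadingCoeff_one_sub_X [Ring R] [Nontrivial R] : (1 - X : R[X]).leadingCoeff = -1 := by
  simp [leadingCoeff, natDegree_one_sub_X, coeff_one]

theorem iterate_derivative_comp_C_add_C_mul_X [CommSemiring R] (p : R[X]) (a b : R) (k : ℕ) :
    derivative^[k] (p.comp (C a + C b * X))
      = C b ^ k * (derivative^[k] p).comp (C a + C b * X) := by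
  induction k generalizing p with
  | zero => simp
  | succ k ih =>
    rw [Function.iterate_succ_apply, derivative_comp, Function.iterate_succ_apply]
    simp only [ih, derivative_add, derivative_C, derivative_C_mul_X, zero_add,
      iterate_derivative_C_mul]
    ring

theorem iteratedDeriv_eval {𝕜 : Type*} [NontriviallyNormedField 𝕜] (p : 𝕜[X]) (k : ℕ) :
    iteratedDeriv k (fun x => p.eval x) = fun x => (derivative^[k] p).eval x := by
  induction k generalizing p with
  | zero => simp
  | succ k ih =>
    have hderiv : _root_.deriv (fun x => p.eval x) = fun x => (derivative p).eval x :=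
      _root_.funext fun _ => p.deriv
    rw [iteratedDeriv_succ', hderiv, ih, Function.iterate_succ_apply]

theorem intervalIntegral_eval_mul_derivative (p q : ℝ[X]) (a b : ℝ) :
    ∫ t in a..b, p.eval t * (derivative q).eval t
      = p.eval b * q.eval b - p.eval a * q.eval a - ∫ t in a..b, (derivative p).eval t * q.eval t :=
  intervalIntegral.integral_mul_deriv_eq_deriv_mul (fun t _ => p.hasDerivAt t)
    (fun t _ => q.hasDerivAt t) ((derivative p).continuous.intervalIntegrable _ _)
    ((derivative q).continuous.intervalIntegrable _ _)

theorem intervalIntegral_eval_mul_iterate_derivative {q : ℝ[X]} {a b : ℝ} {k : ℕ}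
    (hq : ∀ m < k, (derivative^[m] q).eval a = 0 ∧ (derivative^[m] q).eval b = 0) (p : ℝ[X]) :
    ∫ t in a..b, p.eval t * (derivative^[k] q).eval t
      = (-1) ^ k * ∫ t in a..b, (derivative^[k] p).eval t * q.eval t := by
  induction k generalizing p with
  | zero => simp
  | succ k ih =>
    obtain ⟨ha, hb⟩ := hq k k.lt_succ_self
    rw [Function.iterate_succ_apply', intervalIntegral_eval_mul_derivative, ha, hb,
      ih (fun m hm => hq m (hm.trans k.lt_succ_self)), ← Function.iterate_succ_apply]
    ring

end Polynomial

theorem integral_pow_mul_one_sub_pow (a b : ℕ) :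
    ∫ t in (0 : ℝ)..1, t ^ a * (1 - t) ^ b
      = (a.factorial * b.factorial : ℝ) / (a + b + 1).factorial := by
  have hΓ := Complex.Gamma_mul_Gamma_eq_betaIntegral (s := a + 1) (t := b + 1)
    (by simp only [Complex.add_re, Complex.natCast_re, Complex.one_re]; positivity)
    (by simp only [Complex.add_re, Complex.natCast_re, Complex.one_re]; positivity)
  have hB : Complex.betaIntegral (a + 1) (b + 1)
      = ∫ t in (0 : ℝ)..1, ((t ^ a * (1 - t) ^ b : ℝ) : ℂ) := by
    simp [Complex.betaIntegral, ← Complex.cpow_natCast]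
  rw [show (a + 1 + (b + 1) : ℂ) = ((a + b + 1 : ℕ) : ℂ) + 1 by push_cast; ring, hB,
    intervalIntegral.integral_ofReal] at hΓ
  simp only [Complex.Gamma_nat_eq_factorial] at hΓ
  apply Complex.ofReal_injective
  push_cast
  rw [eq_div_iff (by exact_mod_cast (a + b + 1).factorial_ne_zero)]
  linear_combination hΓ.symm

namespace Matrix

theorem det_eval_eq_prod_coeff_mul_det_vandermonde {R : Type*} [CommRing R] {n : ℕ}
    (p : Fin n → Polynomial R) (h_deg : ∀ i, (p i).natDegree ≤ i) (v : Fin n → R) :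
    (of fun i j => (p i).eval (v j)).det = (∏ i, (p i).coeff i) * (vandermonde v).det := by
  rw [← det_transpose]
  change (of fun i j => (p j).eval (v i)).det = _
  rw [eval_matrixOfPolynomials_eq_vandermonde_mul_matrixOfPolynomials v p h_deg, det_mul,
    det_of_isUpperTriangular (matrixOfPolynomials_blockTriangular p h_deg), mul_comm]
  rfl

end Matrix

theorem Equiv.Perm.eq_of_apply_succ_eq {n : ℕ} {σ τ : Perm (Fin (n + 1))}
    (h : ∀ j : Fin n, σ j.succ = τ j.succ) : σ = τ := by
  -- `τ⁻¹ * σ` moves at most the point `0`, and no permutation moves exactly one point.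
  have hsupp : (τ⁻¹ * σ).support ⊆ {0} := by
    intro i hi
    cases i using Fin.cases with
    | zero => exact mem_singleton_self 0
    | succ j => simp [Perm.mul_apply, h j] at hi
  have hcard : (τ⁻¹ * σ).support.card = 0 := by
    have hle := card_le_card hsupp
    rw [card_singleton] at hle
    have := (τ⁻¹ * σ).card_support_ne_one
    omega
  rw [card_eq_zero, Perm.support_eq_empty_iff, inv_mul_eq_one] at hcard
  exact hcard.symm

theorem Equiv.Perm.sum_apply_zero {M : Type*} [AddCommMonoid M] {n : ℕ} (F : Fin (n + 1) → M) :
    ∑ σ : Perm (Fin (n + 1)), F (σ 0) = n.factorial • ∑ k, F k := by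
  rw [← Perm.decomposeFin.symm.sum_comp, Fintype.sum_prod_type]
  simp [Perm.decomposeFin_symm_apply_zero, sum_const, Fintype.card_perm, smul_sum]

theorem Equiv.Perm.intCast_sign_mul_self {ι R : Type*} [Fintype ι] [DecidableEq ι] [Ring R]
    (σ : Perm ι) : ((Perm.sign σ : ℤ) : R) * (Perm.sign σ : ℤ) = 1 := by
  rw [← Int.cast_mul, ← Units.val_mul, Int.units_mul_self, Units.val_one, Int.cast_one]

section DeterminantalEnsemble

open Matrix

variable {α ι : Type*} [Fintype ι] [DecidableEq ι]

def detSqWeight {R : Type*} [CommRing R] (f : ι → α → R) (w : α → R) (l : ι → α) : R :=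
  (of fun i j => f i (l j)).det ^ 2 * ∏ j, w (l j)

theorem detSqWeight_eq_sum_perm {R : Type*} [CommRing R] (f : ι → α → R) (w : α → R)
    (l : ι → α) :
    detSqWeight f w l = ∑ σ : Perm ι, ∑ τ : Perm ι, ((Perm.sign σ : ℤ) : R) * (Perm.sign τ : ℤ) *
      ∏ j, (f (σ j) (l j) * f (τ j) (l j) * w (l j)) := by
  rw [detSqWeight, sq, det_apply, sum_mul_sum, sum_mul]
  refine sum_congr rfl fun σ _ => ?_
  rw [sum_mul]
  refine sum_congr rfl fun τ _ => ?_
  simp only [Units.smul_def, zsmul_eq_mul, of_apply, prod_mul_distrib]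
  ring

variable [MeasurableSpace α] {μ : Measure α} [SigmaFinite μ] {f : ι → α → ℝ} {w : α → ℝ}
  {b : ι → ℝ}

theorem integral_prod_perm (horth : ∀ i j, ∫ t, f i t * f j t * w t ∂μ = if i = j then b i else 0)
    (σ τ : Perm ι) :
    ∫ l, ∏ j, (f (σ j) (l j) * f (τ j) (l j) * w (l j)) ∂Measure.pi (fun _ => μ)
      = if σ = τ then ∏ i, b i else 0 := by
  rw [integral_fintype_prod_eq_prod (fun j t => f (σ j) t * f (τ j) t * w t)]
  simp_rw [horth, Fintype.prod_ite_zero, ← Perm.ext_iff]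
  split_ifs with h
  · exact Equiv.prod_comp σ b
  · rfl

theorem integral_prod_perm_cons {N : ℕ} {f : Fin (N + 1) → α → ℝ} {b : Fin (N + 1) → ℝ}
    (horth : ∀ i j, ∫ t, f i t * f j t * w t ∂μ = if i = j then b i else 0)
    (σ τ : Perm (Fin (N + 1))) (x : α) :
    ∫ l, ∏ j, (f (σ j) ((Fin.cons x l : Fin (N + 1) → α) j) *
        f (τ j) ((Fin.cons x l : Fin (N + 1) → α) j) * w ((Fin.cons x l : Fin (N + 1) → α) j))
        ∂Measure.pi (fun _ => μ)
      = if σ = τ then f (σ 0) x * f (σ 0) x * w x * ∏ j : Fin N, b (σ j.succ) else 0 := by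
  simp_rw [Fin.prod_univ_succ, Fin.cons_zero, Fin.cons_succ]
  rw [integral_const_mul,
    integral_fintype_prod_eq_prod (fun (j : Fin N) t => f (σ j.succ) t * f (τ j.succ) t * w t)]
  simp_rw [horth, Fintype.prod_ite_zero]
  by_cases h : σ = τ
  · simp [h]
  · have : ¬ ∀ j : Fin N, σ j.succ = τ j.succ := fun h' => h (Perm.eq_of_apply_succ_eq h')
    simp [h, this]

theorem integral_detSqWeight
    (hint : ∀ i j, Integrable (fun t => f i t * f j t * w t) μ)
    (horth : ∀ i j, ∫ t, f i t * f j t * w t ∂μ = if i = j then b i else 0) :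
    ∫ l, detSqWeight f w l ∂Measure.pi (fun _ => μ)
      = (Fintype.card ι).factorial * ∏ i, b i := by
  have hterm (σ τ : Perm ι) : Integrable (fun l : ι → α => ((Perm.sign σ : ℤ) : ℝ) *
      (Perm.sign τ : ℤ) * ∏ j, (f (σ j) (l j) * f (τ j) (l j) * w (l j)))
      (Measure.pi fun _ => μ) :=
    (Integrable.fintype_prod fun j => hint (σ j) (τ j)).const_mul _
  simp_rw [detSqWeight_eq_sum_perm]
  rw [integral_finsetSum _ fun σ _ => integrable_finsetSum _ fun τ _ => hterm σ τ]
  simp_rw [integral_finsetSum _ fun τ _ => hterm _ τ, integral_const_mul,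
    integral_prod_perm horth, mul_ite, mul_zero,
    sum_ite_eq, mem_univ, if_true, Perm.intCast_sign_mul_self, one_mul, sum_const, card_univ,
    Fintype.card_perm, nsmul_eq_mul]

theorem integral_detSqWeight_cons {N : ℕ} {f : Fin (N + 1) → α → ℝ} {b : Fin (N + 1) → ℝ}
    (hint : ∀ i j, Integrable (fun t => f i t * f j t * w t) μ)
    (horth : ∀ i j, ∫ t, f i t * f j t * w t ∂μ = if i = j then b i else 0)
    (hb : ∀ i, b i ≠ 0) (x : α) :
    ∫ l, detSqWeight f w (Fin.cons x l) ∂Measure.pi (fun _ => μ)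
      = N.factorial * (∏ i, b i) * ∑ k, (b k)⁻¹ * (f k x ^ 2 * w x) := by
  have hterm (σ τ : Perm (Fin (N + 1))) : Integrable (fun l : Fin N → α =>
      ((Perm.sign σ : ℤ) : ℝ) * (Perm.sign τ : ℤ) *
        ∏ j, (f (σ j) ((Fin.cons x l : Fin (N + 1) → α) j) *
          f (τ j) ((Fin.cons x l : Fin (N + 1) → α) j) * w ((Fin.cons x l : Fin (N + 1) → α) j)))
      (Measure.pi fun _ => μ) := by
    simp_rw [Fin.prod_univ_succ, Fin.cons_zero, Fin.cons_succ, ← mul_assoc]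
    exact (Integrable.fintype_prod fun (j : Fin N) => hint (σ j.succ) (τ j.succ)).const_mul _
  simp_rw [detSqWeight_eq_sum_perm]
  rw [integral_finsetSum _ fun σ _ => integrable_finsetSum _ fun τ _ => hterm σ τ]
  simp_rw [integral_finsetSum _ fun τ _ => hterm _ τ, integral_const_mul,
    integral_prod_perm_cons horth, mul_ite, mul_zero, sum_ite_eq, mem_univ, if_true,
    Perm.intCast_sign_mul_self, one_mul]
  have hsplit (σ : Perm (Fin (N + 1))) :
      ∏ j : Fin N, b (σ j.succ) = (b (σ 0))⁻¹ * ∏ i, b i := by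
    rw [← Equiv.prod_comp σ b, Fin.prod_univ_succ, inv_mul_cancel_left₀ (hb _)]
  simp_rw [hsplit]
  rw [Perm.sum_apply_zero (fun k => f k x * f k x * w x * ((b k)⁻¹ * ∏ i, b i)), nsmul_eq_mul,
    mul_sum, mul_sum]
  refine sum_congr rfl fun k _ => ?_
  ring

end DeterminantalEnsemble

def betaWeight (a b : ℕ) : ℝ[X] := X ^ a * (1 - X) ^ b

@[simp]
theorem eval_betaWeight (a b : ℕ) (x : ℝ) : (betaWeight a b).eval x = x ^ a * (1 - x) ^ b := by
  simp [betaWeight]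

theorem betaWeight_ne_zero (a b : ℕ) : betaWeight a b ≠ 0 :=
  mul_ne_zero (pow_ne_zero _ X_ne_zero) (pow_ne_zero _ one_sub_X_ne_zero)

theorem natDegree_betaWeight (a b : ℕ) : (betaWeight a b).natDegree = a + b := by
  rw [betaWeight, natDegree_mul (pow_ne_zero _ X_ne_zero) (pow_ne_zero _ one_sub_X_ne_zero),
    natDegree_pow, natDegree_pow, natDegree_X, natDegree_one_sub_X, mul_one, mul_one]

theorem leadingCoeff_betaWeight (a b : ℕ) : (betaWeight a b).leadingCoeff = (-1) ^ b := by
  simp [betaWeight, leadingCoeff_mul, leadingCoeff_one_sub_X]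

theorem betaWeight_dvd_iterate_derivative (a b m : ℕ) :
    betaWeight (a - m) (b - m) ∣ derivative^[m] (betaWeight a b) :=
  have hcop : IsCoprime (X : ℝ[X]) (1 - X) := ⟨1, 1, by ring⟩
  (hcop.pow).mul_dvd (pow_sub_dvd_iterate_derivative_of_pow_dvd m (dvd_mul_right _ _))
    (pow_sub_dvd_iterate_derivative_of_pow_dvd m (dvd_mul_left _ _))

theorem eval_iterate_derivative_betaWeight_of_lt {a b m : ℕ} (ha : m < a) (hb : m < b) :
    (derivative^[m] (betaWeight a b)).eval 0 = 0 ∧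
      (derivative^[m] (betaWeight a b)).eval 1 = 0 := by
  obtain ⟨r, hr⟩ := betaWeight_dvd_iterate_derivative a b m
  simp [hr, Nat.sub_ne_zero_of_lt ha, Nat.sub_ne_zero_of_lt hb]

def shiftedJacobi (α β k : ℕ) : ℝ[X] :=
  C (k.factorial : ℝ)⁻¹ * (derivative^[k] (betaWeight (k + α) (k + β)) / betaWeight α β)

theorem betaWeight_mul_shiftedJacobi (α β k : ℕ) :
    betaWeight α β * shiftedJacobi α β k
      = C (k.factorial : ℝ)⁻¹ * derivative^[k] (betaWeight (k + α) (k + β)) := by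
  have hdvd := betaWeight_dvd_iterate_derivative (k + α) (k + β) k
  rw [Nat.add_sub_cancel_left, Nat.add_sub_cancel_left] at hdvd
  rw [shiftedJacobi, mul_left_comm, EuclideanDomain.mul_div_cancel' (betaWeight_ne_zero α β) hdvd]

theorem natDegree_shiftedJacobi_le (α β k : ℕ) : (shiftedJacobi α β k).natDegree ≤ k := by
  by_cases h : shiftedJacobi α β k = 0
  · simp [h]
  have hdeg := congrArg natDegree (betaWeight_mul_shiftedJacobi α β k)
  have hle := (natDegree_C_mul_le (k.factorial : ℝ)⁻¹ _).trans
    (natDegree_iterate_derivative (betaWeight (k + α) (k + β)) k)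
  rw [natDegree_mul (betaWeight_ne_zero α β) h, natDegree_betaWeight] at hdeg
  rw [← hdeg, natDegree_betaWeight] at hle
  omega

theorem coeff_shiftedJacobi_self (α β k : ℕ) :
    (shiftedJacobi α β k).coeff k = (-1) ^ k * (2 * k + α + β).choose k := by
  -- Compare the coefficients of the top degree `α + β + k` in the Rodrigues formula.
  have htop := congrArg (fun p : ℝ[X] => p.coeff (α + β + k)) (betaWeight_mul_shiftedJacobi α β k)
  have hq : (betaWeight α β).coeff (α + β) = (-1) ^ β := by
    rw [← natDegree_betaWeight α β, coeff_natDegree, leadingCoeff_betaWeight]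
  have hR : (betaWeight (k + α) (k + β)).coeff (α + β + k + k) = (-1) ^ (k + β) := by
    rw [show α + β + k + k = k + α + (k + β) by ring, ← natDegree_betaWeight (k + α) (k + β),
      coeff_natDegree, leadingCoeff_betaWeight]
  rw [coeff_mul_add_eq_of_natDegree_le (natDegree_betaWeight α β).le
      (natDegree_shiftedJacobi_le α β k), coeff_C_mul, coeff_iterate_derivative, hq, hR,
    show α + β + k + k = 2 * k + α + β by ring, Nat.descFactorial_eq_factorial_mul_choose,
    nsmul_eq_mul] at htop
  have hk : (k.factorial : ℝ) ≠ 0 := by positivity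
  push_cast at htop
  field_simp at htop
  rw [pow_add] at htop
  exact mul_left_cancel₀ (pow_ne_zero β (by norm_num : (-1 : ℝ) ≠ 0))
    (by linear_combination htop)

theorem bCoef_eq (k α β : ℕ) :
    bCoef k α β = (2 * k + α + β).choose k * ((k + α).factorial * (k + β).factorial : ℝ)
      / (2 * k + α + β + 1).factorial := by
  have hchoose := Nat.choose_mul_factorial_mul_factorial (n := 2 * k + α + β) (k := k + α)
    (by omega)
  rw [show 2 * k + α + β - (k + α) = k + β by omega] at hchoose
  have hpos : 0 < (2 * k + α + β).choose (k + α) := Nat.choose_pos (by omega)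
  rw [bCoef, Nat.factorial_succ, ← hchoose]
  push_cast
  field_simp

theorem bCoef_pos (k α β : ℕ) : 0 < bCoef k α β := by
  have := Nat.choose_pos (show k ≤ 2 * k + α + β by omega)
  rw [bCoef_eq]
  positivity

theorem intervalIntegral_mul_shiftedJacobi (α β k : ℕ) (q : ℝ[X]) :
    ∫ t in (0 : ℝ)..1, q.eval t * (shiftedJacobi α β k).eval t * (t ^ α * (1 - t) ^ β)
      = (-1) ^ k / k.factorial *
          ∫ t in (0 : ℝ)..1, (derivative^[k] q).eval t * (t ^ (k + α) * (1 - t) ^ (k + β)) := by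
  have hrod (t : ℝ) : q.eval t * (shiftedJacobi α β k).eval t * (t ^ α * (1 - t) ^ β)
      = (k.factorial : ℝ)⁻¹ *
          (q.eval t * (derivative^[k] (betaWeight (k + α) (k + β))).eval t) := by
    have := congrArg (eval t) (betaWeight_mul_shiftedJacobi α β k)
    simp only [eval_mul, eval_C, eval_betaWeight] at this
    linear_combination q.eval t * this
  simp_rw [hrod]
  rw [intervalIntegral.integral_const_mul, intervalIntegral_eval_mul_iterate_derivative
    (fun m hm => eval_iterate_derivative_betaWeight_of_lt (by omega) (by omega))]
  simp only [eval_betaWeight]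
  ring

theorem intervalIntegral_shiftedJacobi_mul_of_lt {α β j k : ℕ} (hjk : j < k) :
    ∫ t in (0 : ℝ)..1,
      (shiftedJacobi α β j).eval t * (shiftedJacobi α β k).eval t * (t ^ α * (1 - t) ^ β) = 0 := by
  rw [intervalIntegral_mul_shiftedJacobi,
    iterate_derivative_eq_zero ((natDegree_shiftedJacobi_le α β j).trans_lt hjk)]
  simp

theorem intervalIntegral_shiftedJacobi_sq (α β k : ℕ) :
    ∫ t in (0 : ℝ)..1,
      (shiftedJacobi α β k).eval t * (shiftedJacobi α β k).eval t * (t ^ α * (1 - t) ^ β)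
      = bCoef k α β := by
  have hconst : derivative^[k] (shiftedJacobi α β k)
      = C ((k.factorial : ℝ) * ((-1) ^ k * (2 * k + α + β).choose k)) := by
    rw [eq_C_of_natDegree_le_zero ((natDegree_iterate_derivative _ k).trans
      (Nat.sub_eq_zero_of_le (natDegree_shiftedJacobi_le α β k)).le), coeff_iterate_derivative,
      zero_add, Nat.descFactorial_self, coeff_shiftedJacobi_self, nsmul_eq_mul]
  simp_rw [intervalIntegral_mul_shiftedJacobi, hconst, eval_C]
  rw [intervalIntegral.integral_const_mul, integral_pow_mul_one_sub_pow, bCoef_eq,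
    show k + α + (k + β) = 2 * k + α + β by ring]
  have hk : (k.factorial : ℝ) ≠ 0 := by positivity
  have hsign : ((-1 : ℝ) ^ k) ^ 2 = 1 := by rw [← pow_mul, mul_comm, pow_mul, neg_one_sq, one_pow]
  field_simp
  rw [hsign, one_mul]

theorem one_sub_X_pow_mul_one_add_X_pow_comp (α β k : ℕ) :
    ((1 - X) ^ (k + α) * (1 + X) ^ (k + β) : ℝ[X]).comp (C 1 + C (-2) * X)
      = C (2 ^ (2 * k + α + β)) * betaWeight (k + α) (k + β) := by
  have h1 : (1 - (C 1 + C (-2) * X) : ℝ[X]) = 2 * X := by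
    simp only [map_one, map_neg, map_ofNat]; ring
  have h2 : (1 + (C 1 + C (-2) * X) : ℝ[X]) = 2 * (1 - X) := by
    simp only [map_one, map_neg, map_ofNat]; ring
  rw [mul_comp, pow_comp, pow_comp, sub_comp, add_comp, one_comp, X_comp, h1, h2, mul_pow,
    mul_pow, betaWeight, map_pow, map_ofNat, show 2 * k + α + β = (k + α) + (k + β) by ring]
  ring

-- At a zero of `x ^ α * (1 - x) ^ β` the factors `(1 ∓ y) ^ (-n : ℤ)` of `jacobiP` are junk
-- `0⁻¹ = 0`.
theorem jacobiP_one_sub_two_mul {α β k : ℕ} {x : ℝ} (hx : x ^ α * (1 - x) ^ β ≠ 0) :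
    jacobiP α β k (1 - 2 * x) = (shiftedJacobi α β k).eval x := by
  set Q : ℝ[X] := (1 - X) ^ (k + α) * (1 + X) ^ (k + β) with hQ
  have hder := congrArg (eval x ∘ derivative^[k]) (one_sub_X_pow_mul_one_add_X_pow_comp α β k)
  simp only [← hQ, Function.comp_apply, iterate_derivative_comp_C_add_C_mul_X,
    iterate_derivative_C_mul, eval_mul, eval_pow, eval_C, eval_comp, eval_add, eval_X,
    neg_pow (2 : ℝ), show 1 + -2 * x = 1 - 2 * x by ring] at hder
  have hrod := congrArg (eval x) (betaWeight_mul_shiftedJacobi α β k)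
  simp only [eval_mul, eval_C, eval_betaWeight] at hrod
  have hfun : (fun y : ℝ => (1 - y) ^ (k + α) * (1 + y) ^ (k + β)) = fun y => Q.eval y := by
    simp [hQ]
  rw [jacobiP, hfun, iteratedDeriv_eval, zpow_neg, zpow_neg, zpow_natCast, zpow_natCast,
    show 1 - (1 - 2 * x) = 2 * x by ring, show 1 + (1 - 2 * x) = 2 * (1 - x) by ring, mul_pow,
    mul_pow]
  have hk : (k.factorial : ℝ) ≠ 0 := by positivity
  have hx0 : x ^ α ≠ 0 := left_ne_zero_of_mul hx
  have hx1 : (1 - x) ^ β ≠ 0 := right_ne_zero_of_mul hx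
  beta_reduce
  generalize eval (1 - 2 * x) (derivative^[k] Q) = E at hder ⊢
  field_simp at hrod ⊢
  refine mul_left_cancel₀ (pow_ne_zero k (two_ne_zero' ℝ)) ?_
  linear_combination hder - 2 ^ (2 * k + α + β) * hrod

theorem jacobiP_sq_mul_weight (α β k : ℕ) (x : ℝ) :
    jacobiP α β k (1 - 2 * x) ^ 2 * (x ^ α * (1 - x) ^ β)
      = (shiftedJacobi α β k).eval x ^ 2 * (x ^ α * (1 - x) ^ β) := by
  by_cases hx : x ^ α * (1 - x) ^ β = 0
  · rw [hx, mul_zero, mul_zero]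
  · rw [jacobiP_one_sub_two_mul hx]

theorem integral_Icc_shiftedJacobi_mul (α β j k : ℕ) :
    ∫ t in Set.Icc (0 : ℝ) 1,
      (shiftedJacobi α β j).eval t * (shiftedJacobi α β k).eval t * (t ^ α * (1 - t) ^ β)
      = if j = k then bCoef j α β else 0 := by
  rw [integral_Icc_eq_integral_Ioc, ← intervalIntegral.integral_of_le zero_le_one]
  rcases lt_trichotomy j k with h | rfl | h
  · rw [if_neg h.ne, intervalIntegral_shiftedJacobi_mul_of_lt h]
  · rw [if_pos rfl, intervalIntegral_shiftedJacobi_sq]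
  · rw [if_neg h.ne']
    simp_rw [mul_comm ((shiftedJacobi α β j).eval _)]
    exact intervalIntegral_shiftedJacobi_mul_of_lt h

theorem jacobiWeight_eq_detSqWeight (n α β : ℕ) (l : Fin n → ℝ) :
    jacobiWeight n α β l = ((∏ i : Fin n, (shiftedJacobi α β i).coeff i)⁻¹) ^ 2 *
      detSqWeight (fun (i : Fin n) t => (shiftedJacobi α β i).eval t)
        (fun t => t ^ α * (1 - t) ^ β) l := by
  have hc : ∏ i : Fin n, (shiftedJacobi α β i).coeff i ≠ 0 := by
    refine prod_ne_zero_iff.mpr fun i _ => ?_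
    rw [coeff_shiftedJacobi_self]
    have := Nat.choose_pos (show (i : ℕ) ≤ 2 * i + α + β by omega)
    positivity
  have hV : (∏ i : Fin n, ∏ j ∈ Ioi i, (l j - l i)) ^ 2 = ∏ i, ∏ j ∈ Ioi i, (l i - l j) ^ 2 := by
    rw [← prod_pow]
    exact prod_congr rfl fun i _ => by rw [← prod_pow]; exact prod_congr rfl fun j _ => by ring
  rw [detSqWeight, Matrix.det_eval_eq_prod_coeff_mul_det_vandermonde _
    (fun i => natDegree_shiftedJacobi_le α β i), Matrix.det_vandermonde, jacobiWeight, mul_pow,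
    hV]
  field_simp

theorem jacobi_marginal_density_general (N α β : ℕ) (x : ℝ) (Z : ℝ)
    (hZ : Z = ∫ l in Set.univ.pi fun _ : Fin (N + 1) => Set.Icc (0:ℝ) 1,
        jacobiWeight (N + 1) α β l) :
    (∫ rest in Set.univ.pi fun _ : Fin N => Set.Icc (0:ℝ) 1,
        jacobiWeight (N + 1) α β (Fin.cons x rest))
      = (Z / (N + 1)) * ∑ k ∈ Finset.range (N + 1),
          (bCoef k α β)⁻¹ * (jacobiP α β k (1 - 2 * x)) ^ 2 * x ^ α * (1 - x) ^ β := by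
  have hint (i j : Fin (N + 1)) : Integrable (fun t => (shiftedJacobi α β i).eval t *
      (shiftedJacobi α β j).eval t * (t ^ α * (1 - t) ^ β)) (volume.restrict (Set.Icc 0 1)) :=
    Continuous.integrableOn_Icc (by fun_prop)
  have horth (i j : Fin (N + 1)) : ∫ t in Set.Icc (0 : ℝ) 1, (shiftedJacobi α β i).eval t *
      (shiftedJacobi α β j).eval t * (t ^ α * (1 - t) ^ β) = if i = j then bCoef i α β else 0 := by
    simp only [integral_Icc_shiftedJacobi_mul, Fin.val_inj]
  have hb (i : Fin (N + 1)) : bCoef i α β ≠ 0 := (bCoef_pos i α β).ne'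
  simp_rw [jacobiWeight_eq_detSqWeight] at hZ ⊢
  rw [integral_const_mul] at hZ ⊢
  rw [volume_pi, Measure.restrict_pi_pi] at hZ ⊢
  rw [integral_detSqWeight hint horth] at hZ
  rw [integral_detSqWeight_cons hint horth hb, hZ, Fintype.card_fin, Nat.factorial_succ,
    ← Fin.sum_univ_eq_sum_range]
  simp_rw [mul_assoc, jacobiP_sq_mul_weight]
  push_cast
  rw [mul_assoc ((N : ℝ) + 1), mul_div_assoc, mul_div_cancel_left₀ _ (by positivity)]
  ring

/-- **Marginal eigenvalue density of the Jacobi ensemble (Appendix A).**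
For `n = N + 1 ≥ 1`, integrating the Jacobi-ensemble weight over the last `N`
eigenvalues gives
`(Z/n) ∑_{k<n} b_{k,α,β}⁻¹ [P_k^{(α,β)}(1−2x)]² x^α (1−x)^β`, where `Z` is the
total mass; i.e. the marginal density of one unordered eigenvalue is
`(1/n) ∑_{k<n} b_{k,α,β}⁻¹ [P_k^{(α,β)}(1−2x)]² x^α (1−x)^β`. -/
theorem jacobi_marginal_density (N α β : ℕ) (x : ℝ) (hx : x ∈ Set.Icc (0:ℝ) 1) (Z : ℝ)
    (hZ : Z = ∫ l in Set.univ.pi fun _ : Fin (N + 1) => Set.Icc (0:ℝ) 1,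
        jacobiWeight (N + 1) α β l) :
    (∫ rest in Set.univ.pi fun _ : Fin N => Set.Icc (0:ℝ) 1,
        jacobiWeight (N + 1) α β (Fin.cons x rest))
      = (Z / (N + 1)) * ∑ k ∈ Finset.range (N + 1),
          (bCoef k α β)⁻¹ * (jacobiP α β k (1 - 2 * x)) ^ 2 * x ^ α * (1 - x) ^ β :=
  jacobi_marginal_density_general N α β x Z hZ
end
end

section
/- (Laplace-type asymptotic used in Example 1.) Let a and b be nonnegative integers. Then lim_{ρ→∞} (log ∫_0^1 x^a (1−x)^b e^{−ρx/2} dx) / (log ρ) = −(a+1); that is, the integral decays polynomially as ρ^{−(a+1)} on the exponential scale. -/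
/-!
On `[0, 1/ρ]` the factors `(1 - x)^b` and `e^{-ρx/2}` are bounded below by constants, so the
integral is at least a constant times `∫₀^{1/ρ} x^a dx = ρ^{-(a+1)}/(a+1)`. Dropping `(1 - x)^b`
and extending to `[0, ∞)` bounds it above by the Gamma integral `a! (2/ρ)^{a+1}`. Hence the
integral is `≍ ρ^{-(a+1)}`, and the constants disappear after dividing the logarithm by `log ρ`.
-/

open Filter MeasureTheory Real Set Topology

theorem tendsto_log_div_rpow_div_log {c : ℝ} (hc : c ≠ 0) (s : ℝ) :
    Tendsto (fun ρ : ℝ => log (c / ρ ^ s) / log ρ) atTop (𝓝 (-s)) := by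
  have h : Tendsto (fun ρ => log c / log ρ - s) atTop (𝓝 (0 - s)) :=
    (tendsto_const_nhds.div_atTop tendsto_log_atTop).sub_const s
  rw [zero_sub] at h
  refine h.congr' ?_
  filter_upwards [eventually_gt_atTop 1] with ρ hρ
  have hlog : log ρ ≠ 0 := (log_pos hρ).ne'
  rw [log_div hc (rpow_pos_of_pos (by linarith) s).ne', log_rpow (by linarith)]
  field_simp

theorem tendsto_log_div_log_of_rpow_bounds {f : ℝ → ℝ} {c₁ c₂ s : ℝ} (hc₁ : 0 < c₁)
    (hc₂ : 0 < c₂) (hlo : ∀ᶠ ρ in atTop, c₁ / ρ ^ s ≤ f ρ)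
    (hhi : ∀ᶠ ρ in atTop, f ρ ≤ c₂ / ρ ^ s) :
    Tendsto (fun ρ => log (f ρ) / log ρ) atTop (𝓝 (-s)) := by
  refine tendsto_of_tendsto_of_tendsto_of_le_of_le'
    (tendsto_log_div_rpow_div_log hc₁.ne' s) (tendsto_log_div_rpow_div_log hc₂.ne' s) ?_ ?_
  all_goals
    filter_upwards [hlo, hhi, eventually_gt_atTop 1] with ρ hρlo hρhi hρ
    have hlo_pos : 0 < c₁ / ρ ^ s := div_pos hc₁ (rpow_pos_of_pos (by linarith) s)
    have hf_pos : 0 < f ρ := hlo_pos.trans_le hρlo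
    have hlog : 0 ≤ log ρ := log_nonneg hρ.le
    gcongr

theorem integral_pow_mul_one_sub_pow_mul_exp_le (a b : ℕ) {ρ : ℝ} (hρ : 0 < ρ) :
    ∫ x in (0:ℝ)..1, x ^ a * (1 - x) ^ b * exp (-ρ * x / 2) ≤
      a.factorial * 2 ^ (a + 1) / ρ ^ (a + 1) := by
  calc ∫ x in (0:ℝ)..1, x ^ a * (1 - x) ^ b * exp (-ρ * x / 2)
      ≤ ∫ x in (0:ℝ)..1, x ^ a * exp (-(ρ / 2 * x)) := by
        refine intervalIntegral.integral_mono_on zero_le_one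
          (Continuous.intervalIntegrable (by fun_prop) _ _)
          (Continuous.intervalIntegrable (by fun_prop) _ _) ?_
        rintro x ⟨hx₀, hx₁⟩
        rw [show -(ρ / 2 * x) = -ρ * x / 2 by ring, mul_right_comm]
        exact mul_le_of_le_one_right (by positivity) (pow_le_one₀ (by linarith) (by linarith))
    _ ≤ a.factorial / (ρ / 2) ^ (a + 1) :=
        intervalIntegral_pow_mul_exp_neg_le zero_le_one (by positivity)
    _ = a.factorial * 2 ^ (a + 1) / ρ ^ (a + 1) := by rw [div_pow, div_div_eq_mul_div]

theorem le_integral_pow_mul_one_sub_pow_mul_exp (a b : ℕ) {ρ : ℝ} (hρ : 2 ≤ ρ) :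
    (1 / 2) ^ b * exp (-(1 / 2)) / (a + 1) / ρ ^ (a + 1) ≤
      ∫ x in (0:ℝ)..1, x ^ a * (1 - x) ^ b * exp (-ρ * x / 2) := by
  have hρ₀ : 0 < ρ := by linarith
  have hle : ∀ x ∈ Icc 0 (1 / ρ),
      (1 / 2) ^ b * exp (-(1 / 2)) * x ^ a ≤ x ^ a * (1 - x) ^ b * exp (-ρ * x / 2) := by
    rintro x ⟨hx₀, hx₁⟩
    have hρx : ρ * x ≤ 1 := by rwa [le_div_iff₀' hρ₀] at hx₁
    have hx : 1 / 2 ≤ 1 - x := by nlinarith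
    rw [mul_comm _ (x ^ a), mul_assoc]
    gcongr
    linarith
  calc (1 / 2) ^ b * exp (-(1 / 2)) / (a + 1) / ρ ^ (a + 1)
      = ∫ x in (0:ℝ)..(1 / ρ), (1 / 2) ^ b * exp (-(1 / 2)) * x ^ a := by
        rw [intervalIntegral.integral_const_mul, integral_pow, zero_pow a.succ_ne_zero, sub_zero,
          one_div_pow ρ]
        field_simp
    _ ≤ ∫ x in (0:ℝ)..(1 / ρ), x ^ a * (1 - x) ^ b * exp (-ρ * x / 2) :=
        intervalIntegral.integral_mono_on (by positivity)
          (Continuous.intervalIntegrable (by fun_prop) _ _)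
          (Continuous.intervalIntegrable (by fun_prop) _ _) hle
    _ ≤ ∫ x in (0:ℝ)..1, x ^ a * (1 - x) ^ b * exp (-ρ * x / 2) := by
        refine intervalIntegral.integral_mono_interval le_rfl (by positivity) ?_ ?_
          (Continuous.intervalIntegrable (by fun_prop) _ _)
        · exact (one_div_le_one_div_of_le two_pos hρ).trans (by norm_num)
        filter_upwards [ae_restrict_mem measurableSet_Ioc] with x ⟨hx₀, hx₁⟩
        have : 0 ≤ 1 - x := by linarith
        positivity

/-- **Laplace-type asymptotic (Example 1).** For nonnegative integers `a, b`,
`∫₀¹ x^a (1−x)^b e^{−ρx/2} dx` decays as `ρ^{−(a+1)}` on the exponential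
scale: `lim_{ρ→∞} log(∫₀¹ x^a (1−x)^b e^{−ρx/2} dx) / log ρ = −(a+1)`. -/
theorem laplace_asymptotic (a b : ℕ) :
    Tendsto (fun ρ : ℝ =>
        Real.log (∫ x in (0:ℝ)..1, x ^ a * (1 - x) ^ b * Real.exp (-ρ * x / 2)) / Real.log ρ)
      atTop (nhds (-((a : ℝ) + 1))) := by
  have hpow : ∀ ρ : ℝ, ρ ^ ((a : ℝ) + 1) = ρ ^ (a + 1) := fun ρ => by
    rw [← Nat.cast_add_one, rpow_natCast]
  refine tendsto_log_div_log_of_rpow_bounds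
    (c₁ := (1 / 2) ^ b * exp (-(1 / 2)) / (a + 1)) (c₂ := a.factorial * 2 ^ (a + 1))
    (by positivity) (by positivity) ?_ ?_
  · filter_upwards [eventually_ge_atTop 2] with ρ hρ
    rw [hpow]
    exact le_integral_pow_mul_one_sub_pow_mul_exp a b hρ
  · filter_upwards [eventually_gt_atTop 0] with ρ hρ
    rw [hpow]
    exact integral_pow_mul_one_sub_pow_mul_exp_le a b hρ
end

section
/- (Error exponent of the repetition scheme, Example 1, case m_t+m_r ≤ m.) Let m, m_t, m_r be natural numbers with m_t ≤ m_r and m_t + m_r ≤ m, and define on [0,1]^{m_t} the weight w(λ₁,…,λ_{m_t}) = ∏_{i=1}^{m_t} λ_i^{m_r−m_t} (1−λ_i)^{m−m_r−m_t} · ∏_{i<j} (λ_i − λ_j)². Then lim_{ρ→∞} (1/log ρ) · log ( ∫_{[0,1]^{m_t}} e^{−(ρ/2)∑_{i=1}^{m_t} λ_i} · w dλ / ∫_{[0,1]^{m_t}} w dλ ) = −m_t·m_r; that is, the average pairwise error probability E[exp(−(ρ/2)∑λ_i)] of the repetition scheme under the Jacobi ensemble J(m_r, m−m_r, m_t) decays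 as ρ^{−m_t·m_r}. -/
open Filter MeasureTheory

noncomputable section

/-!
The numerator is squeezed between two constant multiples of `ρ ^ (-n (α + n))`, where
`n = m_t`, `α = m_r - m_t` and `n (α + n) = m_t m_r`; the denominator is a positive constant.
Let `D = n α + n (n - 1)` be the degree of `w`. For the upper bound, `w(λ) ≤ (∑ λᵢ) ^ D` on the
cube, and half of the exponential turns `(∑ λᵢ) ^ D` into `D! (4/ρ) ^ D`, while the other half
integrates to at most `(4/ρ) ^ n`. For the lower bound, restrict to the box
`λᵢ ∈ [(2i+1)/ρ, (2i+2)/ρ]` of volume `ρ ^ (-n)`: there `∑ λᵢ ≤ 2n²/ρ`, each `λᵢ ≥ 1/ρ`,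
`1 - λᵢ ≥ 1/2` and `|λᵢ - λⱼ| ≥ 1/ρ`, so the integrand is at least a constant times `ρ ^ (-D)`.
-/

open Finset Real Topology
open scoped Nat

theorem two_mul_sum_card_Ioi (n : ℕ) : 2 * ∑ i : Fin n, #(Ioi i) = n * (n - 1) := by
  simp only [Fin.card_Ioi]
  rw [Fin.sum_univ_eq_sum_range (fun i => n - 1 - i) n]
  have := sum_range_reflect (fun j => j) n
  have := sum_range_id_mul_two n
  omega

section Vandermonde

variable {n : ℕ}

theorem prod_Ioi_const_sq (c : ℝ) : ∏ i : Fin n, ∏ _j ∈ Ioi i, c ^ 2 = c ^ (n * (n - 1)) := by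
  simp_rw [prod_const, ← pow_mul, prod_pow_eq_pow_sum, ← mul_sum]
  rw [← two_mul_sum_card_Ioi, mul_comm]

theorem prod_Ioi_sub_sq_le {l : Fin n → ℝ} {s : ℝ} (h : ∀ i j, |l i - l j| ≤ s) :
    ∏ i, ∏ j ∈ Ioi i, (l i - l j) ^ 2 ≤ s ^ (n * (n - 1)) := by
  rw [← prod_Ioi_const_sq]
  refine prod_le_prod (fun i _ => prod_nonneg fun j _ => sq_nonneg _) fun i _ =>
    prod_le_prod (fun j _ => sq_nonneg _) fun j _ => ?_
  exact sq_le_sq' (abs_le.1 (h i j)).1 (abs_le.1 (h i j)).2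

theorem pow_le_prod_Ioi_sub_sq {l : Fin n → ℝ} {δ : ℝ} (hδ : 0 ≤ δ)
    (h : ∀ i j, i < j → l i + δ ≤ l j) :
    δ ^ (n * (n - 1)) ≤ ∏ i, ∏ j ∈ Ioi i, (l i - l j) ^ 2 := by
  rw [← prod_Ioi_const_sq]
  refine prod_le_prod (fun i _ => prod_nonneg fun j _ => sq_nonneg _) fun i _ =>
    prod_le_prod (fun j _ => sq_nonneg _) fun j hj => ?_
  rw [← neg_sub, neg_sq]
  exact pow_le_pow_left₀ hδ (by linarith [h i j (mem_Ioi.1 hj)]) 2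

end Vandermonde

theorem exp_neg_mul_mul_pow_le {c x : ℝ} (hc : 0 < c) (hx : 0 ≤ x) (D : ℕ) :
    exp (-(c * x)) * x ^ D ≤ D ! / c ^ D := by
  have h := Real.pow_div_factorial_le_exp _ (mul_nonneg hc.le hx) D
  rw [div_le_iff₀ (by positivity), mul_pow] at h
  rw [le_div_iff₀ (by positivity)]
  calc exp (-(c * x)) * x ^ D * c ^ D = exp (-(c * x)) * (c ^ D * x ^ D) := by ring
    _ ≤ exp (-(c * x)) * (exp (c * x) * D !) := by gcongr
    _ = D ! := by rw [← mul_assoc, ← exp_add, neg_add_cancel, exp_zero, one_mul]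

theorem setIntegral_Icc_exp_neg_mul_le {c : ℝ} (hc : 0 < c) :
    ∫ x in Set.Icc 0 1, exp (-c * x) ≤ 1 / c := by
  calc ∫ x in Set.Icc 0 1, exp (-c * x) ≤ ∫ x in Set.Ioi 0, exp (-c * x) := by
        rw [integral_Icc_eq_integral_Ioc]
        exact setIntegral_mono_set (integrableOn_exp_mul_Ioi (neg_lt_zero.2 hc) 0)
          (ae_of_all _ fun x => (exp_pos _).le) (ae_of_all _ Set.Ioc_subset_Ioi_self)
    _ = 1 / c := by rw [integral_exp_mul_Ioi (neg_lt_zero.2 hc)]; simp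

theorem tendsto_inv_log_mul_log_of_bounds {f : ℝ → ℝ} {c C : ℝ} {k : ℕ} (hc : 0 < c)
    (hf : ∀ᶠ ρ in atTop, c / ρ ^ k ≤ f ρ ∧ f ρ ≤ C / ρ ^ k) :
    Tendsto (fun ρ => 1 / log ρ * log (f ρ)) atTop (𝓝 (-k)) := by
  have hlim (a : ℝ) : Tendsto (fun ρ => 1 / log ρ * (a - k * log ρ)) atTop (𝓝 (-k)) := by
    have h := (tendsto_log_atTop.inv_tendsto_atTop.const_mul a).sub_const (k : ℝ)
    rw [mul_zero, zero_sub] at h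
    refine h.congr' ?_
    filter_upwards [eventually_gt_atTop 1] with ρ hρ
    simp only [Pi.inv_apply]
    field_simp [(log_pos hρ).ne']
  have hlog {a ρ : ℝ} (ha : 0 < a) (hρ : 0 < ρ) : log (a / ρ ^ k) = log a - k * log ρ := by
    rw [log_div ha.ne' (pow_pos hρ k).ne', log_pow]
  have hsandwich : ∀ᶠ ρ in atTop, 0 < log ρ ∧
      log c - k * log ρ ≤ log (f ρ) ∧ log (f ρ) ≤ log C - k * log ρ := by
    filter_upwards [hf, eventually_gt_atTop 1] with ρ ⟨hlo, hhi⟩ hρ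
    have hρk : 0 < ρ ^ k := pow_pos (one_pos.trans hρ) k
    have hfpos : 0 < f ρ := (div_pos hc hρk).trans_le hlo
    have hC : 0 < C := (div_pos_iff_of_pos_right hρk).1 (hfpos.trans_le hhi)
    rw [← hlog hc (one_pos.trans hρ), ← hlog hC (one_pos.trans hρ)]
    exact ⟨log_pos hρ, log_le_log (div_pos hc hρk) hlo, log_le_log hfpos hhi⟩
  exact tendsto_of_tendsto_of_tendsto_of_le_of_le' (hlim (log c)) (hlim (log C))
    (hsandwich.mono fun ρ h => mul_le_mul_of_nonneg_left h.2.1 (one_div_nonneg.2 h.1.le))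
    (hsandwich.mono fun ρ h => mul_le_mul_of_nonneg_left h.2.2 (one_div_nonneg.2 h.1.le))

def unitCube (n : ℕ) : Set (Fin n → ℝ) := Set.univ.pi fun _ => Set.Icc 0 1

theorem isCompact_unitCube (n : ℕ) : IsCompact (unitCube n) :=
  isCompact_univ_pi fun _ => isCompact_Icc

theorem measurableSet_unitCube (n : ℕ) : MeasurableSet (unitCube n) :=
  MeasurableSet.univ_pi fun _ => measurableSet_Icc

theorem setIntegral_unitCube_prod (n : ℕ) (f : ℝ → ℝ) :
    ∫ l in unitCube n, ∏ i, f (l i) = (∫ x in Set.Icc 0 1, f x) ^ n := by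
  rw [unitCube, volume_pi, Measure.restrict_pi_pi, integral_fintype_prod_eq_pow,
    Fintype.card_fin]

section JacobiWeight

variable {n : ℕ} (α β : ℕ)

theorem continuous_jacobiWeight : Continuous (jacobiWeight n α β) := by
  unfold jacobiWeight
  fun_prop

variable {α β} {l : Fin n → ℝ}

theorem jacobiWeight_nonneg (hl : l ∈ unitCube n) : 0 ≤ jacobiWeight n α β l :=
  mul_nonneg (prod_nonneg fun i _ => mul_nonneg (pow_nonneg (hl i trivial).1 _)
      (pow_nonneg (sub_nonneg.2 (hl i trivial).2) _))
    (prod_nonneg fun _ _ => prod_nonneg fun _ _ => sq_nonneg _)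

theorem jacobiWeight_le_sum_pow (hl : l ∈ unitCube n) :
    jacobiWeight n α β l ≤ (∑ i, l i) ^ (n * α + n * (n - 1)) := by
  have h0 i : 0 ≤ l i := (hl i trivial).1
  have h1 i : 0 ≤ 1 - l i := sub_nonneg.2 (hl i trivial).2
  have hle i : l i ≤ ∑ i, l i := single_le_sum (fun j _ => h0 j) (mem_univ i)
  rw [pow_add]
  refine mul_le_mul ?_ (prod_Ioi_sub_sq_le fun i j => abs_sub_le_of_nonneg_of_le (h0 i) (hle i)
    (h0 j) (hle j)) (prod_nonneg fun _ _ => prod_nonneg fun _ _ => sq_nonneg _)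
    (pow_nonneg (sum_nonneg fun i _ => h0 i) _)
  calc ∏ i, l i ^ α * (1 - l i) ^ β ≤ ∏ _i : Fin n, (∑ i, l i) ^ α := by
        refine prod_le_prod (fun i _ => mul_nonneg (pow_nonneg (h0 i) _) (pow_nonneg (h1 i) _))
          fun i _ => ?_
        calc l i ^ α * (1 - l i) ^ β ≤ l i ^ α * 1 :=
              mul_le_mul_of_nonneg_left (pow_le_one₀ (h1 i) (by linarith [h0 i]))
                (pow_nonneg (h0 i) _)
          _ ≤ (∑ i, l i) ^ α := by rw [mul_one]; exact pow_le_pow_left₀ (h0 i) (hle i) α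
    _ = (∑ i, l i) ^ (n * α) := by rw [prod_const, Finset.card_univ, Fintype.card_fin, ← pow_mul']

end JacobiWeight

def gapBox (n : ℕ) (ρ : ℝ) : Set (Fin n → ℝ) :=
  Set.univ.pi fun i => Set.Icc ((2 * i + 1) / ρ) ((2 * i + 2) / ρ)

section GapBox

variable {n : ℕ} {ρ : ℝ} {l : Fin n → ℝ}

theorem measurableSet_gapBox : MeasurableSet (gapBox n ρ) :=
  MeasurableSet.univ_pi fun _ => measurableSet_Icc

theorem volume_gapBox_ne_top : volume (gapBox n ρ) ≠ ⊤ :=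
  (isCompact_univ_pi fun _ => isCompact_Icc).measure_lt_top.ne

theorem measureReal_gapBox (hρ : 0 < ρ) : volume.real (gapBox n ρ) = ρ⁻¹ ^ n := by
  have hside (i : Fin n) : (2 * i + 2) / ρ - (2 * i + 1) / ρ = ρ⁻¹ := by field_simp; ring
  simp only [measureReal_def, gapBox, volume_pi_pi, Real.volume_Icc, hside, prod_const,
    Finset.card_univ, Fintype.card_fin, ENNReal.toReal_pow,
    ENNReal.toReal_ofReal (inv_nonneg.2 hρ.le)]

theorem inv_le_of_mem_gapBox (hρ : 0 < ρ) (hl : l ∈ gapBox n ρ) (i : Fin n) : ρ⁻¹ ≤ l i :=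
  le_trans (by rw [inv_eq_one_div]; gcongr; linarith [(i : ℕ).cast_nonneg (α := ℝ)])
    (hl i trivial).1

theorem le_of_mem_gapBox (hρ : 0 < ρ) (hl : l ∈ gapBox n ρ) (i : Fin n) : l i ≤ 2 * n / ρ :=
  (hl i trivial).2.trans <| by
    gcongr
    have : ((i : ℕ) : ℝ) + 1 ≤ n := by exact_mod_cast i.isLt
    linarith

theorem add_inv_le_of_mem_gapBox (hρ : 0 < ρ) (hl : l ∈ gapBox n ρ) {i j : Fin n} (hij : i < j) :
    l i + ρ⁻¹ ≤ l j := by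
  have hij' : ((i : ℕ) : ℝ) + 1 ≤ j := by exact_mod_cast hij
  calc l i + ρ⁻¹ ≤ (2 * i + 2) / ρ + ρ⁻¹ := by gcongr; exact (hl i trivial).2
    _ = (2 * (i + 1) + 1) / ρ := by field_simp
    _ ≤ (2 * j + 1) / ρ := by gcongr
    _ ≤ l j := (hl j trivial).1

theorem le_half_of_mem_gapBox (hρ : 0 < ρ) (hnρ : 4 * n ≤ ρ) (hl : l ∈ gapBox n ρ) (i : Fin n) :
    l i ≤ 1 / 2 :=
  (le_of_mem_gapBox hρ hl i).trans <| by rw [div_le_div_iff₀ hρ two_pos]; linarith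

theorem gapBox_subset_unitCube (hρ : 0 < ρ) (hnρ : 4 * n ≤ ρ) : gapBox n ρ ⊆ unitCube n :=
  fun _ hl i _ => ⟨(inv_pos.2 hρ).le.trans (inv_le_of_mem_gapBox hρ hl i),
    (le_half_of_mem_gapBox hρ hnρ hl i).trans (by norm_num)⟩

theorem exp_neg_sq_le_of_mem_gapBox (hρ : 0 < ρ) (hl : l ∈ gapBox n ρ) :
    exp (-(n : ℝ) ^ 2) ≤ exp (-(ρ / 2) * ∑ i, l i) := by
  have hsum : ∑ i, l i ≤ n * (2 * n / ρ) := by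
    simpa using sum_le_sum fun i (_ : i ∈ univ) => le_of_mem_gapBox hρ hl i
  have : ρ / 2 * ∑ i, l i ≤ (n : ℝ) ^ 2 := by
    calc ρ / 2 * ∑ i, l i ≤ ρ / 2 * (n * (2 * n / ρ)) := by gcongr
      _ = (n : ℝ) ^ 2 := by field_simp
  gcongr
  linarith

theorem jacobiWeight_ge_of_mem_gapBox (α β : ℕ) (hρ : 0 < ρ) (hnρ : 4 * n ≤ ρ)
    (hl : l ∈ gapBox n ρ) :
    (1 / 2) ^ (n * β) * ρ⁻¹ ^ (n * α + n * (n - 1)) ≤ jacobiWeight n α β l := by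
  have h0 i : 0 ≤ l i := (inv_pos.2 hρ).le.trans (inv_le_of_mem_gapBox hρ hl i)
  rw [pow_add, ← mul_assoc, jacobiWeight]
  refine mul_le_mul ?_ (pow_le_prod_Ioi_sub_sq (inv_pos.2 hρ).le
    fun i j hij => add_inv_le_of_mem_gapBox hρ hl hij) (by positivity)
    (prod_nonneg fun i _ => mul_nonneg (pow_nonneg (h0 i) _)
      (pow_nonneg (by linarith [le_half_of_mem_gapBox hρ hnρ hl i]) _))
  calc (1 / 2) ^ (n * β) * ρ⁻¹ ^ (n * α) = ∏ _i : Fin n, ρ⁻¹ ^ α * (1 / 2) ^ β := by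
        rw [prod_const, Finset.card_univ, Fintype.card_fin, mul_pow, ← pow_mul, ← pow_mul,
          mul_comm, mul_comm α, mul_comm β]
    _ ≤ ∏ i, l i ^ α * (1 - l i) ^ β := by
        refine prod_le_prod (fun _ _ => by positivity) fun i _ => ?_
        exact mul_le_mul (pow_le_pow_left₀ (by positivity) (inv_le_of_mem_gapBox hρ hl i) α)
          (pow_le_pow_left₀ (by norm_num) (by linarith [le_half_of_mem_gapBox hρ hnρ hl i]) β)
          (by positivity) (pow_nonneg (h0 i) α)

end GapBox

def errorIntegral (n α β : ℕ) (ρ : ℝ) : ℝ :=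
  ∫ l in unitCube n, exp (-(ρ / 2) * ∑ i, l i) * jacobiWeight n α β l

section ErrorIntegral

variable {n : ℕ} {α β : ℕ} {ρ : ℝ}

theorem integrableOn_exp_mul_jacobiWeight (ρ : ℝ) :
    IntegrableOn (fun l => exp (-(ρ / 2) * ∑ i, l i) * jacobiWeight n α β l) (unitCube n) :=
  ((by fun_prop : Continuous fun l : Fin n → ℝ => exp (-(ρ / 2) * ∑ i, l i)).mul
    (continuous_jacobiWeight α β)).continuousOn.integrableOn_compact (isCompact_unitCube n)

theorem errorIntegral_le (hρ : 0 < ρ) :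
    errorIntegral n α β ρ ≤ (n * α + n * (n - 1)) ! / (ρ / 4) ^ (n * α + n * (n - 1) + n) := by
  set D := n * α + n * (n - 1)
  have hρ4 : 0 < ρ / 4 := by positivity
  have hpoint : ∀ l ∈ unitCube n, exp (-(ρ / 2) * ∑ i, l i) * jacobiWeight n α β l ≤
      D ! / (ρ / 4) ^ D * ∏ i, exp (-(ρ / 4) * l i) := by
    intro l hl
    have hs : 0 ≤ ∑ i, l i := sum_nonneg fun i _ => (hl i trivial).1
    rw [← exp_sum, ← mul_sum]
    calc exp (-(ρ / 2) * ∑ i, l i) * jacobiWeight n α β l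
        = exp (-(ρ / 4) * ∑ i, l i) * (exp (-(ρ / 4 * ∑ i, l i)) * jacobiWeight n α β l) := by
          rw [← mul_assoc, ← exp_add]
          ring_nf
      _ ≤ exp (-(ρ / 4) * ∑ i, l i) * (exp (-(ρ / 4 * ∑ i, l i)) * (∑ i, l i) ^ D) := by
          gcongr
          exact jacobiWeight_le_sum_pow hl
      _ ≤ exp (-(ρ / 4) * ∑ i, l i) * (D ! / (ρ / 4) ^ D) := by
          gcongr
          exact exp_neg_mul_mul_pow_le hρ4 hs D
      _ = D ! / (ρ / 4) ^ D * exp (-(ρ / 4) * ∑ i, l i) := mul_comm _ _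
  calc errorIntegral n α β ρ
      ≤ ∫ l in unitCube n, D ! / (ρ / 4) ^ D * ∏ i, exp (-(ρ / 4) * l i) :=
        setIntegral_mono_on (integrableOn_exp_mul_jacobiWeight ρ)
          ((by fun_prop : Continuous fun l : Fin n → ℝ =>
            D ! / (ρ / 4) ^ D * ∏ i, exp (-(ρ / 4) * l i)).continuousOn.integrableOn_compact
              (isCompact_unitCube n)) (measurableSet_unitCube n) hpoint
    _ = D ! / (ρ / 4) ^ D * (∫ x in Set.Icc 0 1, exp (-(ρ / 4) * x)) ^ n := by
        rw [integral_const_mul, setIntegral_unitCube_prod n fun x => exp (-(ρ / 4) * x)]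
    _ ≤ D ! / (ρ / 4) ^ D * (1 / (ρ / 4)) ^ n := by
        gcongr
        exact setIntegral_Icc_exp_neg_mul_le hρ4
    _ = D ! / (ρ / 4) ^ (D + n) := by rw [one_div_pow, ← div_eq_mul_one_div, div_div, ← pow_add]

theorem errorIntegral_ge (hρ : 0 < ρ) (hnρ : 4 * n ≤ ρ) :
    exp (-(n : ℝ) ^ 2) * (1 / 2) ^ (n * β) * ρ⁻¹ ^ (n * α + n * (n - 1) + n) ≤
      errorIntegral n α β ρ := by
  have hint := integrableOn_exp_mul_jacobiWeight (n := n) (α := α) (β := β) ρ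
  have hsub := gapBox_subset_unitCube hρ hnρ
  calc exp (-(n : ℝ) ^ 2) * (1 / 2) ^ (n * β) * ρ⁻¹ ^ (n * α + n * (n - 1) + n)
      = exp (-(n : ℝ) ^ 2) * ((1 / 2) ^ (n * β) * ρ⁻¹ ^ (n * α + n * (n - 1))) *
          volume.real (gapBox n ρ) := by rw [measureReal_gapBox hρ, pow_add]; ring
    _ ≤ ∫ l in gapBox n ρ, exp (-(ρ / 2) * ∑ i, l i) * jacobiWeight n α β l :=
        setIntegral_ge_of_const_le_real measurableSet_gapBox volume_gapBox_ne_top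
          (fun l hl => mul_le_mul (exp_neg_sq_le_of_mem_gapBox hρ hl)
            (jacobiWeight_ge_of_mem_gapBox α β hρ hnρ hl) (by positivity) (exp_pos _).le)
          (hint.mono_set hsub)
    _ ≤ errorIntegral n α β ρ :=
        setIntegral_mono_set hint
          ((ae_restrict_iff' (measurableSet_unitCube n)).2 (ae_of_all _ fun l hl =>
            mul_nonneg (exp_pos _).le (jacobiWeight_nonneg hl)))
          (ae_of_all _ hsub)

theorem errorIntegral_le_integral_jacobiWeight (hρ : 0 ≤ ρ) :
    errorIntegral n α β ρ ≤ ∫ l in unitCube n, jacobiWeight n α β l :=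
  setIntegral_mono_on (integrableOn_exp_mul_jacobiWeight ρ)
    ((continuous_jacobiWeight α β).continuousOn.integrableOn_compact (isCompact_unitCube n))
    (measurableSet_unitCube n) fun l hl => by
      have hs : 0 ≤ ∑ i, l i := sum_nonneg fun i _ => (hl i trivial).1
      exact mul_le_of_le_one_left (jacobiWeight_nonneg hl)
        (exp_le_one_iff.2 (by nlinarith))

variable (n α β)

theorem integral_jacobiWeight_pos : 0 < ∫ l in unitCube n, jacobiWeight n α β l := by
  have hρ : (0 : ℝ) < 4 * n + 4 := by positivity
  exact (by positivity : 0 < exp (-(n : ℝ) ^ 2) * (1 / 2) ^ (n * β) *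
    (4 * n + 4 : ℝ)⁻¹ ^ (n * α + n * (n - 1) + n)).trans_le
    ((errorIntegral_ge hρ (by linarith)).trans (errorIntegral_le_integral_jacobiWeight hρ.le))

theorem exists_errorIntegral_bounds : ∃ c C : ℝ, 0 < c ∧ ∀ᶠ ρ in atTop,
    c / ρ ^ (n * (α + n)) ≤ errorIntegral n α β ρ ∧
      errorIntegral n α β ρ ≤ C / ρ ^ (n * (α + n)) := by
  have hk : n * α + n * (n - 1) + n = n * (α + n) := by
    rcases n with _ | n
    · rfl
    · simp only [Nat.add_sub_cancel]; ring
  refine ⟨exp (-(n : ℝ) ^ 2) * (1 / 2) ^ (n * β), (n * α + n * (n - 1)) ! * 4 ^ (n * (α + n)),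
    by positivity, ?_⟩
  filter_upwards [eventually_gt_atTop 0, eventually_ge_atTop (4 * n : ℝ)] with ρ hρ hnρ
  constructor
  · simpa [hk, div_eq_mul_inv] using errorIntegral_ge (n := n) (α := α) (β := β) hρ hnρ
  · simpa [hk, div_pow, div_div_eq_mul_div] using errorIntegral_le (n := n) (α := α) (β := β) hρ

end ErrorIntegral

theorem repetition_scheme_error_exponent_general (m mt mr : ℕ) (hmt : mt ≤ mr) :
    Tendsto (fun ρ : ℝ => (1 / Real.log ρ) *
        Real.log ((∫ l in Set.univ.pi fun _ : Fin mt => Set.Icc (0:ℝ) 1,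
              Real.exp (-(ρ / 2) * ∑ i, l i) * jacobiWeight mt (mr - mt) (m - mr - mt) l)
          / ∫ l in Set.univ.pi fun _ : Fin mt => Set.Icc (0:ℝ) 1,
              jacobiWeight mt (mr - mt) (m - mr - mt) l))
      atTop (nhds (-((mt : ℝ) * (mr : ℝ)))) := by
  obtain ⟨c, C, hc, hbounds⟩ := exists_errorIntegral_bounds mt (mr - mt) (m - mr - mt)
  set Z := ∫ l in unitCube mt, jacobiWeight mt (mr - mt) (m - mr - mt) l
  have hZ : 0 < Z := integral_jacobiWeight_pos mt (mr - mt) (m - mr - mt)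
  have hk : ((mt * (mr - mt + mt) : ℕ) : ℝ) = mt * mr := by
    rw [Nat.sub_add_cancel hmt, Nat.cast_mul]
  rw [← hk]
  refine tendsto_inv_log_mul_log_of_bounds (C := C / Z) (div_pos hc hZ) ?_
  filter_upwards [hbounds] with ρ ⟨hlo, hhi⟩
  rw [div_right_comm, div_right_comm C]
  exact ⟨div_le_div_of_nonneg_right hlo hZ.le, div_le_div_of_nonneg_right hhi hZ.le⟩

/-- **Error exponent of the repetition scheme (Example 1, case `m_t+m_r ≤ m`).**
The average pairwise error probability `E[exp(−(ρ/2)∑λᵢ)]` under the Jacobi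
ensemble `J(m_r, m−m_r, m_t)` (whose unordered-eigenvalue density on
`[0,1]^{m_t}` is proportional to
`∏ᵢ λᵢ^{m_r−m_t}(1−λᵢ)^{m−m_r−m_t} ∏_{i<j}(λᵢ−λⱼ)²`) decays as
`ρ^{−m_t·m_r}`. -/
theorem repetition_scheme_error_exponent (m mt mr : ℕ) (hmt : mt ≤ mr) (hsum : mt + mr ≤ m) :
    Tendsto (fun ρ : ℝ => (1 / Real.log ρ) *
        Real.log ((∫ l in Set.univ.pi fun _ : Fin mt => Set.Icc (0:ℝ) 1,
              Real.exp (-(ρ / 2) * ∑ i, l i) * jacobiWeight mt (mr - mt) (m - mr - mt) l)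
          / ∫ l in Set.univ.pi fun _ : Fin mt => Set.Icc (0:ℝ) 1,
              jacobiWeight mt (mr - mt) (m - mr - mt) l))
      atTop (nhds (-((mt : ℝ) * (mr : ℝ)))) :=
  repetition_scheme_error_exponent_general m mt mr hmt
end
end
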